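/- arXiv:2206.10252 — 5 statements merged into one kernel-verified Lean document; each statement's English description precedes it below -/
import Mathlib

section
/- Let ω be a weight function with associated φ(x)=ω(e^x) and Young conjugate φ*. For all h, k, l > 0 there exist m, C > 0 such that (1/m)φ*(m(y+l)) + k·y ≤ (1/h)φ*(h·y) + log C for all y ≥ 0. -/
open Real Set

/-- The Young (Legendre) conjugate of `φ` on the half-line `[0, ∞)`. -/
noncomputable def youngConj (φ : ℝ → ℝ) (y : ℝ) : ℝ :=
  sSup ((fun x => x * y - φ x) '' Set.Ici 0)

theorem stmt4 (ω : ℝ → ℝ)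
    (hmono : MonotoneOn ω (Set.Ici 0))
    (hcont : ContinuousOn ω (Set.Ici 0))
    (hnonneg : ∀ t ≥ (0:ℝ), 0 ≤ ω t)
    (hω0 : ω 0 = 0)
    (hα : ∃ C > (0:ℝ), ∀ t ≥ (0:ℝ), ω (2 * t) ≤ C * (ω t + 1))
    (hγ : Asymptotics.IsLittleO Filter.atTop Real.log ω)
    (hδ : ConvexOn ℝ (Set.Ici 0) (fun x => ω (Real.exp x)))
    (h k l : ℝ) (hh : 0 < h) (hk : 0 < k) (hl : 0 < l) :
    ∃ m > (0:ℝ), ∃ C > (0:ℝ), ∀ y ≥ (0:ℝ),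
      (1 / m) * youngConj (fun x => ω (Real.exp x)) (m * (y + l)) + k * y ≤
        (1 / h) * youngConj (fun x => ω (Real.exp x)) (h * y) + Real.log C := by
  obtain ⟨C₀, hC₀pos, hC₀⟩ := hα
  set φ : ℝ → ℝ := fun x => ω (Real.exp x) with hφdef
  have hφ0 : ∀ x : ℝ, 0 ≤ φ x := fun x => hnonneg _ (Real.exp_pos x).le
  -- the (γ) condition in additive form
  have glem : ∀ ε > (0:ℝ), ∃ A ≥ (0:ℝ), ∀ x ≥ (0:ℝ), x ≤ ε * φ x + A := by
    intro ε hε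
    obtain ⟨T, hT⟩ := Filter.eventually_atTop.mp (hγ.def hε)
    refine ⟨Real.log (max T 1), Real.log_nonneg (le_max_right T 1), fun x hx => ?_⟩
    by_cases hc : Real.exp x ≥ max T 1
    · have h1 := hT (Real.exp x) (le_trans (le_max_left T 1) hc)
      rw [Real.log_exp] at h1
      have h2 : ‖x‖ = x := Real.norm_of_nonneg hx
      have h3 : ‖ω (Real.exp x)‖ = ω (Real.exp x) :=
        Real.norm_of_nonneg (hnonneg _ (Real.exp_pos x).le)
      rw [h2, h3] at h1
      have := Real.log_nonneg (le_max_right T 1)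
      linarith
    · push_neg at hc
      have : x < Real.log (max T 1) := by
        have := Real.log_lt_log (Real.exp_pos x) hc
        rwa [Real.log_exp] at this
      have hεφ : 0 ≤ ε * φ x := mul_nonneg hε.le (hφ0 x)
      linarith
  -- boundedness of the defining set of the Young conjugate
  have bdd : ∀ y ≥ (0:ℝ), BddAbove ((fun x => x * y - φ x) '' Set.Ici 0) := by
    intro y hy
    obtain ⟨A, hA0, hA⟩ := glem (1 / (y + 1)) (by positivity)
    refine ⟨A * y, ?_⟩
    rintro _ ⟨x, hx, rfl⟩
    show x * y - φ x ≤ A * y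
    have h1 := hA x hx
    have hφx := hφ0 x
    have h2 : (1 / (y + 1)) * y ≤ 1 := by
      rw [div_mul_eq_mul_div, div_le_one (by linarith)]; linarith
    nlinarith [mul_le_mul_of_nonneg_right h1 hy, mul_le_mul_of_nonneg_right h2 hφx]
  have ne : ∀ y : ℝ, ((fun x => x * y - φ x) '' Set.Ici 0).Nonempty :=
    fun y => ⟨_, ⟨0, Set.self_mem_Ici, rfl⟩⟩
  have lower : ∀ y ≥ (0:ℝ), ∀ x ≥ (0:ℝ), x * y - φ x ≤ youngConj φ y :=
    fun y hy x hx => le_csSup (bdd y hy) ⟨x, hx, rfl⟩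
  have upper : ∀ y : ℝ, ∀ B : ℝ, (∀ x ≥ (0:ℝ), x * y - φ x ≤ B) → youngConj φ y ≤ B := by
    intro y B hB
    refine csSup_le (ne y) ?_
    rintro _ ⟨x, hx, rfl⟩
    exact hB x hx
  -- (α) single step and iteration
  set L : ℝ := max C₀ 1 with hLdef
  have hL1 : (1:ℝ) ≤ L := le_max_right C₀ 1
  have hLpos : (0:ℝ) < L := lt_of_lt_of_le one_pos hL1
  have step : ∀ x : ℝ, φ (x + Real.log 2) ≤ L * φ x + L := by
    intro x
    have he : Real.exp (x + Real.log 2) = 2 * Real.exp x := by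
      rw [Real.exp_add, Real.exp_log two_pos]; ring
    have h1 : φ (x + Real.log 2) ≤ C₀ * (φ x + 1) := by
      simp only [hφdef, he]
      exact hC₀ (Real.exp x) (Real.exp_pos x).le
    have hC₀L : C₀ ≤ L := le_max_left C₀ 1
    nlinarith [hφ0 x]
  have iter : ∀ n : ℕ, ∀ x : ℝ, φ (x + n * Real.log 2) ≤ L ^ n * φ x + n * L ^ n := by
    intro n
    induction n with
    | zero => intro x; simp
    | succ n ih =>
      intro x
      have e : x + (n + 1 : ℕ) * Real.log 2 = (x + n * Real.log 2) + Real.log 2 := by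
        push_cast; ring
      rw [e]
      have h1 := step (x + n * Real.log 2)
      have h2 := ih x
      have h3 : L ≤ L ^ (n + 1) := le_self_pow₀ hL1 (Nat.succ_ne_zero n)
      have h4 : L ^ (n + 1) = L * L ^ n := by ring
      push_cast
      nlinarith [hφ0 x, pow_pos hLpos n]
  -- choose the parameters
  set n : ℕ := ⌈k / Real.log 2⌉₊ + 1 with hndef
  have hlog2 : (0:ℝ) < Real.log 2 := Real.log_pos one_lt_two
  have hnk : k ≤ (n : ℝ) * Real.log 2 := by
    have h1 : k / Real.log 2 ≤ (⌈k / Real.log 2⌉₊ : ℝ) := Nat.le_ceil _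
    have h2 : (⌈k / Real.log 2⌉₊ : ℝ) ≤ (n : ℝ) := by
      rw [hndef]; push_cast; linarith
    have := (div_le_iff₀ hlog2).mp (le_trans h1 h2)
    linarith
  set P : ℝ := L ^ n with hPdef
  have hPpos : (0:ℝ) < P := pow_pos hLpos n
  have hP1 : (1:ℝ) ≤ P := by
    calc (1:ℝ) = 1 ^ n := (one_pow n).symm
      _ ≤ L ^ n := pow_le_pow_left₀ zero_le_one hL1 n
  obtain ⟨A, hA0, hA⟩ := glem (P / (h * l)) (by positivity)
  refine ⟨h / (2 * P), by positivity, Real.exp (l * A + n * P / h), Real.exp_pos _, ?_⟩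
  intro y hy
  set m : ℝ := h / (2 * P) with hmdef
  have hmpos : 0 < m := by rw [hmdef]; positivity
  set S : ℝ := youngConj φ (h * y) with hSdef
  -- pointwise bound giving the estimate for the conjugate at m*(y+l)
  have key : youngConj φ (m * (y + l)) ≤
      m * ((1 / h) * S + (l * A + (n : ℝ) * P / h) - k * y) := by
    refine upper _ _ (fun x hx => ?_)
    -- lower bound for S
    have hS : (x + (n : ℝ) * Real.log 2) * (h * y) - φ (x + (n : ℝ) * Real.log 2) ≤ S :=
      lower (h * y) (by positivity) (x + (n : ℝ) * Real.log 2)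
        (by positivity)
    have hiter := iter n x
    have hS2 : (x + (n : ℝ) * Real.log 2) * (h * y) - (P * φ x + (n : ℝ) * P) ≤ S := by
      rw [hPdef]; linarith
    have hS3 : (x + (n : ℝ) * Real.log 2) * y - (P / h) * φ x - (n : ℝ) * P / h ≤ (1 / h) * S := by
      have hd := (div_le_div_iff_of_pos_right hh).mpr hS2
      have e : ((x + (n : ℝ) * Real.log 2) * (h * y) - (P * φ x + (n : ℝ) * P)) / h =
          (x + (n : ℝ) * Real.log 2) * y - (P / h) * φ x - (n : ℝ) * P / h := by
        field_simp; ring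
      rw [e] at hd
      have e2 : (1 / h) * S = S / h := by ring
      linarith [e2 ▸ hd]
    -- the (γ) estimate
    have h3 : x * l ≤ (P / h) * φ x + l * A := by
      have h1 := mul_le_mul_of_nonneg_left (hA x hx) hl.le
      have e2 : l * (P / (h * l)) = P / h := by field_simp
      calc x * l = l * x := by ring
        _ ≤ l * (P / (h * l) * φ x + A) := h1
        _ = (l * (P / (h * l))) * φ x + l * A := by ring
        _ = (P / h) * φ x + l * A := by rw [e2]
    have h4 : k * y ≤ ((n : ℝ) * Real.log 2) * y := mul_le_mul_of_nonneg_right hnk hy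
    -- inner linear inequality
    have inner : x * (y + l) - (2 * P / h) * φ x ≤
        (1 / h) * S + (l * A + (n : ℝ) * P / h) - k * y := by
      ring_nf at hS3 h3 h4 ⊢
      linarith
    have hmul := mul_le_mul_of_nonneg_left inner hmpos.le
    have egoal : x * (m * (y + l)) - φ x = m * (x * (y + l) - (2 * P / h) * φ x) := by
      rw [hmdef]; field_simp
    rw [egoal]
    exact hmul
  have hlogC : Real.log (Real.exp (l * A + (n : ℝ) * P / h)) = l * A + (n : ℝ) * P / h :=
    Real.log_exp _
  have hfinal := mul_le_mul_of_nonneg_left key (by positivity : (0:ℝ) ≤ 1 / m)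
  have e3 : (1 / m) * (m * ((1 / h) * S + (l * A + (n : ℝ) * P / h) - k * y)) =
      (1 / h) * S + (l * A + (n : ℝ) * P / h) - k * y := by
    field_simp
  rw [e3] at hfinal
  rw [hlogC]
  linarith
end

section
/- Let v₁, v₂, v₃, v₄ : ℝ^d → (0,∞) be continuous functions with v₂(x+t) ≤ C₀ v₁(x) v₄(−t) for all x,t ∈ ℝ^d (some C₀ > 0), and v₄/v₃ ∈ L¹(ℝ^d). If ψ is continuous with ‖ψ‖_{v₃} := sup_x |ψ(x)| v₃(x) < ∞, then for every continuous f with ‖f‖_{v₁} := sup_x |f(x)| v₁(x) < ∞, the function V_ψ f(x,ξ) = ∫ f(t) conj(ψ(t−x)) e^{−2πiξ·t} dt is well-defined, continuous on ℝ^{2d}, and satisfies sup_{(x,ξ)} |V_ψ f(x,ξ)| v₂(x) ≤ C₀ ‖v₄/v₃‖_{L¹} ‖ψ‖_{v₃} ‖f‖_{v₁}. -/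
open Real MeasureTheory

/-- The short-time Fourier transform of `f` with window `ψ`. -/
noncomputable def STFT {d : ℕ} (ψ f : EuclideanSpace ℝ (Fin d) → ℂ)
    (x ξ : EuclideanSpace ℝ (Fin d)) : ℂ :=
  ∫ t, f t * (starRingEnd ℂ) (ψ (t - x)) *
    Complex.exp (-(2 * (π : ℂ) * Complex.I) * ((inner ℝ ξ t : ℝ) : ℂ))

lemma norm_aux (a b : ℂ) (r : ℝ) :
    ‖a * (starRingEnd ℂ) b * Complex.exp (-(2 * (π : ℂ) * Complex.I) * (r : ℂ))‖
      = ‖a‖ * ‖b‖ := by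
  have h : (-(2 * (π : ℂ) * Complex.I) * (r : ℂ)) = ((-(2 * π * r) : ℝ) : ℂ) * Complex.I := by
    push_cast; ring
  have h2 : ‖Complex.exp (-(2 * (π : ℂ) * Complex.I) * (r : ℂ))‖ = 1 := by
    rw [h, Complex.norm_exp_ofReal_mul_I]
  rw [norm_mul, norm_mul, RCLike.norm_conj, h2, mul_one]

theorem stmt8 (d : ℕ) (v₁ v₂ v₃ v₄ : EuclideanSpace ℝ (Fin d) → ℝ)
    (hv₁c : Continuous v₁) (hv₂c : Continuous v₂) (hv₃c : Continuous v₃)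
    (hv₄c : Continuous v₄)
    (hv₁ : ∀ x, 0 < v₁ x) (hv₂ : ∀ x, 0 < v₂ x) (hv₃ : ∀ x, 0 < v₃ x)
    (hv₄ : ∀ x, 0 < v₄ x)
    (C₀ : ℝ) (hC₀ : 0 < C₀)
    (hsub : ∀ x t, v₂ (x + t) ≤ C₀ * v₁ x * v₄ (-t))
    (hint : Integrable (fun t => v₄ t / v₃ t)
      (volume : Measure (EuclideanSpace ℝ (Fin d))))
    (ψ f : EuclideanSpace ℝ (Fin d) → ℂ) (hψc : Continuous ψ) (hfc : Continuous f)
    (Mψ Mf : ℝ)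
    (hψ : ∀ x, ‖ψ x‖ * v₃ x ≤ Mψ)
    (hf : ∀ x, ‖f x‖ * v₁ x ≤ Mf) :
    (∀ x ξ : EuclideanSpace ℝ (Fin d),
        Integrable (fun t => f t * (starRingEnd ℂ) (ψ (t - x)) *
          Complex.exp (-(2 * (π : ℂ) * Complex.I) * ((inner ℝ ξ t : ℝ) : ℂ)))
          (volume : Measure (EuclideanSpace ℝ (Fin d)))) ∧
      Continuous (fun p : EuclideanSpace ℝ (Fin d) × EuclideanSpace ℝ (Fin d) =>
        STFT ψ f p.1 p.2) ∧
      ∀ x ξ : EuclideanSpace ℝ (Fin d),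
        ‖STFT ψ f x ξ‖ * v₂ x ≤
          C₀ * (∫ t, v₄ t / v₃ t) * Mψ * Mf := by
  have hMf : 0 ≤ Mf := le_trans (mul_nonneg (norm_nonneg _) (hv₁ 0).le) (hf 0)
  have hMψ : 0 ≤ Mψ := le_trans (mul_nonneg (norm_nonneg _) (hv₃ 0).le) (hψ 0)
  -- key pointwise bound
  have key : ∀ x u : EuclideanSpace ℝ (Fin d),
      ‖f (u + x)‖ * ‖ψ u‖ ≤ C₀ * Mf * Mψ / v₂ x * (v₄ u / v₃ u) := by
    intro x u
    have h1 : v₂ x ≤ C₀ * v₁ (u + x) * v₄ u := by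
      have := hsub (u + x) (-u)
      simpa [add_neg_cancel_right] using this
    have h2 : 1 / v₁ (u + x) ≤ C₀ * v₄ u / v₂ x := by
      rw [div_le_div_iff₀ (hv₁ _) (hv₂ _)]
      nlinarith [h1]
    have hfb : ‖f (u + x)‖ ≤ Mf * (1 / v₁ (u + x)) := by
      rw [mul_one_div, le_div_iff₀ (hv₁ _)]; exact hf _
    have hψb : ‖ψ u‖ ≤ Mψ * (1 / v₃ u) := by
      rw [mul_one_div, le_div_iff₀ (hv₃ _)]; exact hψ _
    calc ‖f (u + x)‖ * ‖ψ u‖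
        ≤ (Mf * (1 / v₁ (u + x))) * (Mψ * (1 / v₃ u)) :=
          mul_le_mul hfb hψb (norm_nonneg _)
            (mul_nonneg hMf (one_div_nonneg.mpr (hv₁ _).le))
      _ ≤ (Mf * (C₀ * v₄ u / v₂ x)) * (Mψ * (1 / v₃ u)) :=
          mul_le_mul_of_nonneg_right (mul_le_mul_of_nonneg_left h2 hMf)
            (mul_nonneg hMψ (one_div_nonneg.mpr (hv₃ _).le))
      _ = C₀ * Mf * Mψ / v₂ x * (v₄ u / v₃ u) := by
          field_simp
  -- integrability
  have hintg : ∀ x : EuclideanSpace ℝ (Fin d),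
      Integrable (fun t => v₄ (t - x) / v₃ (t - x))
        (volume : Measure (EuclideanSpace ℝ (Fin d))) :=
    fun x => hint.comp_sub_right x
  have hInt : ∀ x ξ : EuclideanSpace ℝ (Fin d),
      Integrable (fun t => f t * (starRingEnd ℂ) (ψ (t - x)) *
          Complex.exp (-(2 * (π : ℂ) * Complex.I) * ((inner ℝ ξ t : ℝ) : ℂ)))
        (volume : Measure (EuclideanSpace ℝ (Fin d))) := by
    intro x ξ
    have hc : Continuous (fun t : EuclideanSpace ℝ (Fin d) =>
        f t * (starRingEnd ℂ) (ψ (t - x)) *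
          Complex.exp (-(2 * (π : ℂ) * Complex.I) * ((inner ℝ ξ t : ℝ) : ℂ))) := by
      apply Continuous.mul
      · exact hfc.mul ((Complex.continuous_conj).comp
          (hψc.comp (continuous_id.sub continuous_const)))
      · exact Complex.continuous_exp.comp (continuous_const.mul
          (Complex.continuous_ofReal.comp (continuous_const.inner continuous_id)))
    refine ((hintg x).const_mul (C₀ * Mf * Mψ / v₂ x)).mono' hc.aestronglyMeasurable ?_
    filter_upwards with t
    rw [norm_aux]
    have := key x (t - x)
    simpa [sub_add_cancel] using this
  refine ⟨hInt, ?_, ?_⟩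
  · -- continuity
    have hshift : ∀ x ξ : EuclideanSpace ℝ (Fin d),
        STFT ψ f x ξ = ∫ u, f (u + x) * (starRingEnd ℂ) (ψ u) *
          Complex.exp (-(2 * (π : ℂ) * Complex.I) * ((inner ℝ ξ (u + x) : ℝ) : ℂ)) := by
      intro x ξ
      rw [STFT, ← integral_add_right_eq_self (fun t => f t * (starRingEnd ℂ) (ψ (t - x)) *
        Complex.exp (-(2 * (π : ℂ) * Complex.I) * ((inner ℝ ξ t : ℝ) : ℂ))) x]
      simp [add_sub_cancel_right]
    have : Continuous (fun p : EuclideanSpace ℝ (Fin d) × EuclideanSpace ℝ (Fin d) =>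
        ∫ u, f (u + p.1) * (starRingEnd ℂ) (ψ u) *
          Complex.exp (-(2 * (π : ℂ) * Complex.I) * ((inner ℝ p.2 (u + p.1) : ℝ) : ℂ))) := by
      rw [continuous_iff_continuousAt]
      intro p₀
      apply continuousAt_of_dominated (bound := fun u =>
        2 * (C₀ * Mf * Mψ) / v₂ p₀.1 * (v₄ u / v₃ u))
      · filter_upwards with p
        apply Continuous.aestronglyMeasurable
        apply Continuous.mul
        · exact (hfc.comp (continuous_id.add continuous_const)).mul
            (Complex.continuous_conj.comp hψc)
        · exact Complex.continuous_exp.comp (continuous_const.mul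
            (Complex.continuous_ofReal.comp
              (continuous_const.inner (continuous_id.add continuous_const))))
      · have hopen : IsOpen {p : EuclideanSpace ℝ (Fin d) × EuclideanSpace ℝ (Fin d) |
            v₂ p₀.1 / 2 < v₂ p.1} :=
          isOpen_Ioi.preimage (hv₂c.comp continuous_fst)
        have hmem : p₀ ∈ {p : EuclideanSpace ℝ (Fin d) × EuclideanSpace ℝ (Fin d) |
            v₂ p₀.1 / 2 < v₂ p.1} := by
          simp only [Set.mem_setOf_eq]
          linarith [hv₂ p₀.1]
        filter_upwards [hopen.mem_nhds hmem] with p hp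
        filter_upwards with u
        rw [norm_aux]
        have h1 := key p.1 u
        have h2 : C₀ * Mf * Mψ / v₂ p.1 ≤ 2 * (C₀ * Mf * Mψ) / v₂ p₀.1 := by
          rw [div_le_div_iff₀ (hv₂ _) (hv₂ _)]
          have h3 : v₂ p₀.1 / 2 < v₂ p.1 := hp
          nlinarith [mul_nonneg (mul_nonneg hC₀.le hMf) hMψ, hv₂ p₀.1, hv₂ p.1]
        exact h1.trans (mul_le_mul_of_nonneg_right h2
          (div_nonneg (hv₄ u).le (hv₃ u).le))
      · exact hint.const_mul _
      · filter_upwards with u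
        apply Continuous.continuousAt
        apply Continuous.mul
        · exact (hfc.comp (continuous_const.add continuous_fst)).mul continuous_const
        · exact Complex.continuous_exp.comp (continuous_const.mul
            (Complex.continuous_ofReal.comp
              (continuous_snd.inner (continuous_const.add continuous_fst))))
    have heq : (fun p : EuclideanSpace ℝ (Fin d) × EuclideanSpace ℝ (Fin d) =>
        STFT ψ f p.1 p.2) = fun p => ∫ u, f (u + p.1) * (starRingEnd ℂ) (ψ u) *
          Complex.exp (-(2 * (π : ℂ) * Complex.I) * ((inner ℝ p.2 (u + p.1) : ℝ) : ℂ)) := by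
      funext p; exact hshift p.1 p.2
    rw [heq]; exact this
  · -- the bound
    intro x ξ
    have hI : 0 ≤ ∫ t, v₄ t / v₃ t := by
      apply integral_nonneg; intro t; exact div_nonneg (hv₄ t).le (hv₃ t).le
    have hb : ‖STFT ψ f x ξ‖ ≤ ∫ t, C₀ * Mf * Mψ / v₂ x * (v₄ (t - x) / v₃ (t - x)) := by
      rw [STFT]
      apply norm_integral_le_of_norm_le ((hintg x).const_mul _)
      filter_upwards with t
      rw [norm_aux]
      have := key x (t - x)
      simpa [sub_add_cancel] using this
    have heq : (∫ t, C₀ * Mf * Mψ / v₂ x * (v₄ (t - x) / v₃ (t - x)))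
        = C₀ * Mf * Mψ / v₂ x * ∫ t, v₄ t / v₃ t := by
      rw [MeasureTheory.integral_const_mul, integral_sub_right_eq_self (fun t => v₄ t / v₃ t) x]
    rw [heq] at hb
    have := mul_le_mul_of_nonneg_right hb (hv₂ x).le
    have hne : v₂ x ≠ 0 := (hv₂ x).ne'
    calc ‖STFT ψ f x ξ‖ * v₂ x
        ≤ C₀ * Mf * Mψ / v₂ x * (∫ t, v₄ t / v₃ t) * v₂ x := this
      _ = C₀ * (∫ t, v₄ t / v₃ t) * Mψ * Mf * (v₂ x / v₂ x) := by ring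
      _ = C₀ * (∫ t, v₄ t / v₃ t) * Mψ * Mf := by rw [div_self hne, mul_one]
end

section
/- Let 𝒱 = {v_λ : λ ∈ (0,∞)} be a family of continuous functions v_λ : ℝ^d → (0,∞) with 1 ≤ v_λ ≤ v_μ for μ ≤ λ. If 𝒱 satisfies condition (DN): ∃λ>0 ∀μ≤λ ∀θ∈(0,1) ∃ν≤μ ∃C>0 ∀x: v_μ(x) ≤ C v_λ(x)^θ v_ν(x)^{1−θ}, then for ω a weight function the following (wQ)-type condition holds: ∀N∈ℕ ∃M≥N, n∈ℕ ∀K≥M, m∈ℕ ∃k∈ℕ, C>0 ∀(x,ξ)∈ℝ^{2d}: v_{1/m}(x) e^{−M ω(ξ)} ≤ C ( v_{1/n}(x) e^{−N ω(ξ)} + v_{1/k}(x) e^{−K ω(ξ)} ). -/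
/-!
Take `M = N + 1` and, for `K > M`, the exponent `θ = 1 - 1/(K - N)`, so that
`M = θ N + (1 - θ) K` and `e^{-M t} = (e^{-N t})^θ (e^{-K t})^{1-θ}`. Condition (DN) bounds
`v_{1/m}` by `C v_λ^θ v_ν^{1-θ}`, hence the left-hand side by the geometric mean
`C (v_λ e^{-N t})^θ (v_ν e^{-K t})^{1-θ}`, and weighted AM–GM bounds that by the sum.
For `K = M` one takes `k = m`.
-/

open Real Set

lemma exists_nat_one_le_one_div_le {ε : ℝ} (hε : 0 < ε) :
    ∃ n : ℕ, 1 ≤ n ∧ (1 : ℝ) / n ≤ ε := by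
  obtain ⟨n, hn⟩ := exists_nat_one_div_lt hε
  exact ⟨n + 1, Nat.le_add_left 1 n, by exact_mod_cast hn.le⟩

lemma rpow_mul_rpow_one_sub_le_add {a b θ : ℝ} (ha : 0 ≤ a) (hb : 0 ≤ b) (hθ₀ : 0 ≤ θ)
    (hθ₁ : θ ≤ 1) : a ^ θ * b ^ (1 - θ) ≤ a + b := by
  have := geom_mean_le_arith_mean2_weighted hθ₀ (sub_nonneg.2 hθ₁) ha hb (by ring)
  nlinarith

lemma exp_neg_convexComb_mul (θ N K t : ℝ) :
    exp (-(θ * N + (1 - θ) * K) * t) = exp (-N * t) ^ θ * exp (-K * t) ^ (1 - θ) := by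
  rw [← exp_mul, ← exp_mul, ← exp_add]
  ring_nf

lemma mul_exp_le_of_le_rpow_mul_rpow {u a b C θ N K t : ℝ} (ha : 0 ≤ a) (hb : 0 ≤ b)
    (hC : 0 ≤ C) (hθ₀ : 0 ≤ θ) (hθ₁ : θ ≤ 1) (hu : u ≤ C * a ^ θ * b ^ (1 - θ)) :
    u * exp (-(θ * N + (1 - θ) * K) * t) ≤ C * (a * exp (-N * t) + b * exp (-K * t)) :=
  calc u * exp (-(θ * N + (1 - θ) * K) * t)
      ≤ C * a ^ θ * b ^ (1 - θ) * (exp (-N * t) ^ θ * exp (-K * t) ^ (1 - θ)) := by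
        rw [exp_neg_convexComb_mul]
        gcongr
    _ = C * ((a * exp (-N * t)) ^ θ * (b * exp (-K * t)) ^ (1 - θ)) := by
        rw [mul_rpow ha (exp_pos _).le, mul_rpow hb (exp_pos _).le]
        ring
    _ ≤ C * (a * exp (-N * t) + b * exp (-K * t)) := by
        gcongr
        exact rpow_mul_rpow_one_sub_le_add (by positivity) (by positivity) hθ₀ hθ₁

theorem stmt10_general (d : ℕ) (v : ℝ → EuclideanSpace ℝ (Fin d) → ℝ)
    (hv1 : ∀ lam > (0:ℝ), ∀ x, 1 ≤ v lam x)
    (hvmono : ∀ mu lam : ℝ, 0 < mu → mu ≤ lam → ∀ x, v lam x ≤ v mu x)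
    (ω : ℝ → ℝ)
    (hDN : ∃ lam > (0:ℝ), ∀ mu : ℝ, 0 < mu → mu ≤ lam → ∀ θ ∈ Set.Ioo (0:ℝ) 1,
      ∃ ν : ℝ, 0 < ν ∧ ν ≤ mu ∧ ∃ C > (0:ℝ), ∀ x,
        v mu x ≤ C * (v lam x) ^ θ * (v ν x) ^ (1 - θ)) :
    ∀ N : ℕ, ∃ M ≥ N, ∃ n : ℕ, 1 ≤ n ∧ ∀ K ≥ M, ∀ m : ℕ, 1 ≤ m →
      ∃ k : ℕ, 1 ≤ k ∧ ∃ C > (0:ℝ), ∀ x ξ : EuclideanSpace ℝ (Fin d),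
        v (1 / m) x * Real.exp (-(M : ℝ) * ω ‖ξ‖) ≤
          C * (v (1 / n) x * Real.exp (-(N : ℝ) * ω ‖ξ‖) +
               v (1 / k) x * Real.exp (-(K : ℝ) * ω ‖ξ‖)) := by
  obtain ⟨lam, hlam, hDN⟩ := hDN
  have hv0 : ∀ mu > (0:ℝ), ∀ x, 0 ≤ v mu x := fun mu hmu x => zero_le_one.trans (hv1 mu hmu x)
  obtain ⟨n, hn, hnlam⟩ := exists_nat_one_le_one_div_le hlam
  refine fun N => ⟨N + 1, N.le_succ, n, hn, fun K hK m hm => ?_⟩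
  have hm0 : (0 : ℝ) < 1 / m := by positivity
  rcases hK.eq_or_lt with rfl | hK
  · refine ⟨m, hm, 1, one_pos, fun x ξ => ?_⟩
    have := mul_nonneg (hv0 (1 / n) (by positivity) x) (exp_pos (-(N : ℝ) * ω ‖ξ‖)).le
    linarith
  have hKN : (1 : ℝ) < K - N := by
    rw [lt_sub_iff_add_lt']
    exact_mod_cast hK
  set θ : ℝ := 1 - 1 / ((K : ℝ) - N)
  have hθ : θ ∈ Ioo 0 1 :=
    ⟨sub_pos.2 ((div_lt_one (by linarith)).2 hKN), sub_lt_self _ (by positivity)⟩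
  obtain ⟨ν, hν, -, C, hC, hbound⟩ :=
    hDN (min (1 / m) lam) (lt_min hm0 hlam) (min_le_right _ _) θ hθ
  obtain ⟨k, hk, hkν⟩ := exists_nat_one_le_one_div_le hν
  refine ⟨k, hk, C, hC, fun x ξ => ?_⟩
  have hM : ((N + 1 : ℕ) : ℝ) = θ * N + (1 - θ) * K := by
    simp only [θ]
    field_simp
    push_cast
    ring
  have hvm : v (1 / m) x ≤ C * v lam x ^ θ * v ν x ^ (1 - θ) :=
    (hvmono _ _ (lt_min hm0 hlam) (min_le_left _ _) x).trans (hbound x)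
  rw [hM]
  calc _ ≤ C * (v lam x * exp (-N * ω ‖ξ‖) + v ν x * exp (-K * ω ‖ξ‖)) :=
        mul_exp_le_of_le_rpow_mul_rpow (hv0 _ hlam x) (hv0 _ hν x) hC.le hθ.1.le hθ.2.le hvm
    _ ≤ _ := by
        gcongr
        · exact hvmono _ _ (by positivity) hnlam x
        · exact hvmono _ _ (by positivity) hkν x

theorem stmt10 (d : ℕ) (v : ℝ → EuclideanSpace ℝ (Fin d) → ℝ)
    (hvc : ∀ lam > (0:ℝ), Continuous (v lam))
    (hv1 : ∀ lam > (0:ℝ), ∀ x, 1 ≤ v lam x)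
    (hvmono : ∀ mu lam : ℝ, 0 < mu → mu ≤ lam → ∀ x, v lam x ≤ v mu x)
    (ω : ℝ → ℝ)
    (hmono : MonotoneOn ω (Set.Ici 0))
    (hcont : ContinuousOn ω (Set.Ici 0))
    (hnonneg : ∀ t ≥ (0:ℝ), 0 ≤ ω t)
    (hω0 : ω 0 = 0)
    (hα : ∃ C > (0:ℝ), ∀ t ≥ (0:ℝ), ω (2 * t) ≤ C * (ω t + 1))
    (hγ : Asymptotics.IsLittleO Filter.atTop Real.log ω)
    (hδ : ConvexOn ℝ (Set.Ici 0) (fun x => ω (Real.exp x)))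
    (hDN : ∃ lam > (0:ℝ), ∀ mu : ℝ, 0 < mu → mu ≤ lam → ∀ θ ∈ Set.Ioo (0:ℝ) 1,
      ∃ ν : ℝ, 0 < ν ∧ ν ≤ mu ∧ ∃ C > (0:ℝ), ∀ x,
        v mu x ≤ C * (v lam x) ^ θ * (v ν x) ^ (1 - θ)) :
    ∀ N : ℕ, ∃ M ≥ N, ∃ n : ℕ, 1 ≤ n ∧ ∀ K ≥ M, ∀ m : ℕ, 1 ≤ m →
      ∃ k : ℕ, 1 ≤ k ∧ ∃ C > (0:ℝ), ∀ x ξ : EuclideanSpace ℝ (Fin d),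
        v (1 / m) x * Real.exp (-(M : ℝ) * ω ‖ξ‖) ≤
          C * (v (1 / n) x * Real.exp (-(N : ℝ) * ω ‖ξ‖) +
               v (1 / k) x * Real.exp (-(K : ℝ) * ω ‖ξ‖)) :=
  stmt10_general d v hv1 hvmono ω hDN
end

section
/- Let 𝒱 = {v_λ : λ ∈ (0,∞)} be a weight system and ω a weight function. If the condition ∀N∈ℕ ∃M≥N, n∈ℕ ∀K≥M, m∈ℕ ∃k∈ℕ, C>0 ∀(x,ξ)∈ℝ^{2d}: v_{1/m}(x) e^{−M ω(ξ)} ≤ C ( v_{1/n}(x) e^{−N ω(ξ)} + v_{1/k}(x) e^{−K ω(ξ)} ) holds, then 𝒱 satisfies (DN): ∃λ>0 ∀μ≤λ ∀θ∈(0,1) ∃ν≤μ ∃C>0 ∀x: v_μ(x) ≤ C v_λ(x)^θ v_ν(x)^{1−θ}. -/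
open Real Set

lemma aux_ineq (b c c' θ s : ℝ) (hb : 1 ≤ b) (hbc' : b ≤ c') (hcc' : c ≤ c') (hc : 1 ≤ c)
    (hs : 0 ≤ s) (hθ : 0 ≤ θ) (hsθ : s + θ ≤ 1) :
    b * (c / b) ^ s ≤ b ^ θ * c' ^ (1 - θ) := by
  have hb0 : (0:ℝ) < b := lt_of_lt_of_le one_pos hb
  have hc0 : (0:ℝ) < c := lt_of_lt_of_le one_pos hc
  have hc'0 : (0:ℝ) < c' := lt_of_lt_of_le hc0 hcc'
  have h1 : b * (c / b) ^ s = b ^ (1 - s) * c ^ s := by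
    rw [Real.div_rpow hc0.le hb0.le, Real.rpow_sub hb0, Real.rpow_one]
    field_simp
  rw [h1]
  have h2 : b ^ (1 - s) = b ^ θ * b ^ (1 - s - θ) := by
    rw [← Real.rpow_add hb0]; ring_nf
  rw [h2]
  have h3 : b ^ (1 - s - θ) ≤ c' ^ (1 - s - θ) :=
    Real.rpow_le_rpow hb0.le hbc' (by linarith)
  have h4 : c ^ s ≤ c' ^ s := Real.rpow_le_rpow hc0.le hcc' hs
  have h5 : c' ^ (1 - s - θ) * c' ^ s = c' ^ (1 - θ) := by
    rw [← Real.rpow_add hc'0]; ring_nf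
  calc b ^ θ * b ^ (1 - s - θ) * c ^ s ≤ b ^ θ * (c' ^ (1 - s - θ) * c' ^ s) := by
        have := mul_le_mul h3 h4 (Real.rpow_nonneg hc0.le s) (Real.rpow_pos_of_pos hc'0 _).le
        nlinarith [Real.rpow_pos_of_pos hb0 θ]
    _ = b ^ θ * c' ^ (1 - θ) := by rw [h5]

set_option maxHeartbeats 2000000 in
theorem stmt11 (d : ℕ) (v : ℝ → EuclideanSpace ℝ (Fin d) → ℝ)
    (hvc : ∀ lam > (0:ℝ), Continuous (v lam))
    (hv1 : ∀ lam > (0:ℝ), ∀ x, 1 ≤ v lam x)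
    (hvmono : ∀ mu lam : ℝ, 0 < mu → mu ≤ lam → ∀ x, v lam x ≤ v mu x)
    (ω : ℝ → ℝ)
    (hmono : MonotoneOn ω (Set.Ici 0))
    (hcont : ContinuousOn ω (Set.Ici 0))
    (hnonneg : ∀ t ≥ (0:ℝ), 0 ≤ ω t)
    (hω0 : ω 0 = 0)
    (hα : ∃ C > (0:ℝ), ∀ t ≥ (0:ℝ), ω (2 * t) ≤ C * (ω t + 1))
    (hγ : Asymptotics.IsLittleO Filter.atTop Real.log ω)
    (hδ : ConvexOn ℝ (Set.Ici 0) (fun x => ω (Real.exp x)))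
    (hwQ : ∀ N : ℕ, ∃ M ≥ N, ∃ n : ℕ, 1 ≤ n ∧ ∀ K ≥ M, ∀ m : ℕ, 1 ≤ m →
      ∃ k : ℕ, 1 ≤ k ∧ ∃ C > (0:ℝ), ∀ x ξ : EuclideanSpace ℝ (Fin d),
        v (1 / m) x * Real.exp (-(M : ℝ) * ω ‖ξ‖) ≤
          C * (v (1 / n) x * Real.exp (-(N : ℝ) * ω ‖ξ‖) +
               v (1 / k) x * Real.exp (-(K : ℝ) * ω ‖ξ‖)))
    :
    ∃ lam > (0:ℝ), ∀ mu : ℝ, 0 < mu → mu ≤ lam → ∀ θ ∈ Set.Ioo (0:ℝ) 1,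
      ∃ ν : ℝ, 0 < ν ∧ ν ≤ mu ∧ ∃ C > (0:ℝ), ∀ x,
        v mu x ≤ C * (v lam x) ^ θ * (v ν x) ^ (1 - θ) := by
  rcases Nat.eq_zero_or_pos d with hd | hd
  · -- dimension 0 : trivial since the space is a single point
    subst hd
    refine ⟨1, one_pos, fun mu hmu _ θ hθ =>
      ⟨mu, hmu, le_refl _, v mu 0, lt_of_lt_of_le one_pos (hv1 mu hmu 0), fun x => ?_⟩⟩
    have hx : x = 0 := Subsingleton.elim x 0
    subst hx
    have h1 : (1:ℝ) ≤ (v 1 0) ^ θ := Real.one_le_rpow (hv1 1 one_pos 0) hθ.1.le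
    have h2 : (1:ℝ) ≤ (v mu 0) ^ (1-θ) := Real.one_le_rpow (hv1 mu hmu 0) (by linarith [hθ.2])
    have h3 : (1:ℝ) ≤ v mu 0 := hv1 mu hmu 0
    have h4 := mul_le_mul h1 h2 one_pos.le (by positivity : (0:ℝ) ≤ (v 1 0) ^ θ)
    calc v mu 0 = v mu 0 * 1 := (mul_one _).symm
      _ ≤ v mu 0 * ((v 1 0)^θ * (v mu 0)^(1-θ)) :=
          mul_le_mul_of_nonneg_left (by linarith) (by linarith)
      _ = v mu 0 * (v 1 0)^θ * (v mu 0)^(1-θ) := by ring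
  -- main case d ≥ 1
  obtain ⟨M, hM1, n, hn1, hQ⟩ := hwQ 1
  have hnn : (0:ℝ) < (n:ℝ) := by exact_mod_cast Nat.lt_of_lt_of_le Nat.zero_lt_one hn1
  have hn0 : (0:ℝ) < 1/(n:ℝ) := by positivity
  refine ⟨1/(n:ℝ), hn0, fun mu hmu hmulam θ hθ => ?_⟩
  obtain ⟨hθ0, hθ1⟩ := hθ
  -- choose K
  obtain ⟨K, hK⟩ := exists_nat_ge (max ((M:ℝ)+1) (((M:ℝ)-1)/(1-θ) + 1))
  have hKM' : (M:ℝ)+1 ≤ K := le_trans (le_max_left _ _) hK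
  have hKM : M ≤ K := by exact_mod_cast le_trans (by norm_num : (M:ℝ) ≤ (M:ℝ)+1) hKM'
  have hMre : (1:ℝ) ≤ (M:ℝ) := by exact_mod_cast hM1
  have hK1 : (1:ℝ) < (K:ℝ) := by linarith
  have hsdef : (((M:ℝ)-1)/(1-θ)) ≤ (K:ℝ)-1 := by
    have := le_trans (le_max_right _ _) hK; linarith
  set s : ℝ := ((M:ℝ)-1)/((K:ℝ)-1) with hs_def
  have hs0 : 0 ≤ s := div_nonneg (by linarith) (by linarith)
  have hsθ : s + θ ≤ 1 := by
    have h1 : (M:ℝ)-1 ≤ ((K:ℝ)-1)*(1-θ) := by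
      rw [div_le_iff₀ (by linarith : (0:ℝ) < 1-θ)] at hsdef; linarith
    have h2 : s ≤ 1-θ := by
      rw [hs_def, div_le_iff₀ (by linarith : (0:ℝ) < (K:ℝ)-1)]; linarith
    linarith
  -- choose m
  obtain ⟨m, hm⟩ := exists_nat_ge (1/mu)
  have hm1 : 1 ≤ m := by
    by_contra h
    push_neg at h
    interval_cases m
    simp at hm
    have : (0:ℝ) < 1/mu := by positivity
    linarith
  have hmm : (0:ℝ) < (m:ℝ) := by exact_mod_cast Nat.lt_of_lt_of_le Nat.zero_lt_one hm1
  have hmμ : 1/(m:ℝ) ≤ mu := by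
    rw [div_le_iff₀ hmm]
    rw [div_le_iff₀ hmu] at hm
    linarith [mul_comm (m:ℝ) mu]
  obtain ⟨k, hk1, C, hC0, hineq⟩ := hQ K hKM m hm1
  have hkk : (0:ℝ) < (k:ℝ) := by exact_mod_cast Nat.lt_of_lt_of_le Nat.zero_lt_one hk1
  set ν : ℝ := min (1/(k:ℝ)) mu with hν_def
  have hνpos : 0 < ν := lt_min (by positivity) hmu
  refine ⟨ν, hνpos, min_le_right _ _, 2*C, by positivity, fun x => ?_⟩
  set a := v (1/(m:ℝ)) x with ha_def
  set b := v (1/(n:ℝ)) x with hb_def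
  set c := v (1/(k:ℝ)) x with hc_def
  set c' := v ν x with hc'_def
  have hb1 : 1 ≤ b := hv1 _ hn0 x
  have hc1 : 1 ≤ c := hv1 _ (by positivity) x
  have hb0 : (0:ℝ) < b := lt_of_lt_of_le one_pos hb1
  have hc0 : (0:ℝ) < c := lt_of_lt_of_le one_pos hc1
  have hcc' : c ≤ c' := hvmono ν (1/(k:ℝ)) hνpos (min_le_left _ _) x
  have hbc' : b ≤ c' := hvmono ν (1/(n:ℝ)) hνpos (le_trans (min_le_right _ _) hmulam) x
  have hc'0 : (0:ℝ) < c' := lt_of_lt_of_le hb0 hbc'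
  have hma : v mu x ≤ a := hvmono (1/(m:ℝ)) mu (by positivity) hmμ x
  -- the key step
  have hkey : a ≤ 2*C*(b^θ * c'^(1-θ)) := by
    have hbθ : b = b^θ * b^(1-θ) := by
      rw [← Real.rpow_add hb0, show θ+(1-θ)=(1:ℝ) by ring, Real.rpow_one]
    by_cases hbc : c ≤ b
    · -- use ξ = 0
      have h := hineq x 0
      have hnz : ω ‖(0 : EuclideanSpace ℝ (Fin d))‖ = 0 := by
        rw [norm_zero, hω0]
      rw [hnz] at h
      simp only [mul_zero, Real.exp_zero, mul_one] at h
      have h1θ : b^(1-θ) ≤ c'^(1-θ) := Real.rpow_le_rpow hb0.le hbc' (by linarith)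
      have h2C : (0:ℝ) ≤ 2*C := by linarith
      calc a ≤ C * (b + c) := h
        _ ≤ C * (b + b) := mul_le_mul_of_nonneg_left (by linarith) hC0.le
        _ = 2*C*b := by ring
        _ = 2*C*(b^θ * b^(1-θ)) := by rw [← hbθ]
        _ ≤ 2*C*(b^θ * c'^(1-θ)) :=
            mul_le_mul_of_nonneg_left
              (mul_le_mul_of_nonneg_left h1θ (Real.rpow_nonneg hb0.le θ)) h2C
    · push_neg at hbc
      set t₀ : ℝ := Real.log (c/b) / ((K:ℝ)-1) with ht₀_def
      have hlog0 : 0 ≤ Real.log (c/b) := Real.log_nonneg (by rw [le_div_iff₀ hb0]; linarith)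
      have ht₀ : 0 ≤ t₀ := div_nonneg hlog0 (by linarith)
      have hωtop : Filter.Tendsto ω Filter.atTop Filter.atTop := by
        apply Filter.tendsto_atTop_mono' Filter.atTop _ Real.tendsto_log_atTop
        filter_upwards [hγ.def one_pos, Filter.eventually_ge_atTop (0:ℝ)] with t h1 h2
        have h3 := hnonneg t h2
        rw [Real.norm_eq_abs, Real.norm_eq_abs] at h1
        calc Real.log t ≤ |Real.log t| := le_abs_self _
          _ ≤ 1 * |ω t| := h1
          _ = ω t := by rw [one_mul, abs_of_nonneg h3]
      obtain ⟨T, hTt, hT0⟩ :=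
        ((hωtop.eventually_ge_atTop t₀).and (Filter.eventually_ge_atTop (0:ℝ))).exists
      obtain ⟨r, hrmem, hωr⟩ := intermediate_value_Icc hT0 (hcont.mono Set.Icc_subset_Ici_self)
        ⟨by rw [hω0]; exact ht₀, hTt⟩
      set ξ : EuclideanSpace ℝ (Fin d) := r • (EuclideanSpace.single (⟨0, hd⟩ : Fin d) (1:ℝ))
        with hξ_def
      have hξn : ‖ξ‖ = r := by
        rw [hξ_def, norm_smul, EuclideanSpace.norm_single]
        simp [abs_of_nonneg hrmem.1]
      have h := hineq x ξ
      rw [hξn, hωr] at h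
      push_cast at h
      have hKne : ((K:ℝ)-1) ≠ 0 := by linarith
      have hKt : ((K:ℝ)-1) * t₀ = Real.log (c/b) := by
        rw [ht₀_def]; field_simp
      have hexpK : c * Real.exp (-(K:ℝ)*t₀) = b * Real.exp (-(1:ℝ)*t₀) := by
        rw [show -(K:ℝ)*t₀ = -(1:ℝ)*t₀ + (-(((K:ℝ)-1)*t₀)) by ring,
          Real.exp_add, hKt, Real.exp_neg, Real.exp_log (div_pos hc0 hb0)]
        field_simp
      rw [hexpK] at h
      have hM0 : a ≤ 2*C*b*Real.exp (((M:ℝ)-1)*t₀) := by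
        have hpos := Real.exp_pos ((M:ℝ)*t₀)
        have h2 := mul_le_mul_of_nonneg_right h hpos.le
        calc a = a * Real.exp (-(M:ℝ)*t₀) * Real.exp ((M:ℝ)*t₀) := by
              rw [mul_assoc, ← Real.exp_add, show -(M:ℝ)*t₀ + (M:ℝ)*t₀ = 0 by ring,
                Real.exp_zero, mul_one]
          _ ≤ C * (b * Real.exp (-(1:ℝ)*t₀) + b * Real.exp (-(1:ℝ)*t₀)) * Real.exp ((M:ℝ)*t₀) :=
              h2
          _ = 2*C*b*(Real.exp (-(1:ℝ)*t₀) * Real.exp ((M:ℝ)*t₀)) := by ring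
          _ = 2*C*b*Real.exp (((M:ℝ)-1)*t₀) := by rw [← Real.exp_add]; congr 1; ring
      have hexps : Real.exp (((M:ℝ)-1)*t₀) = (c/b)^s := by
        rw [Real.rpow_def_of_pos (div_pos hc0 hb0), ht₀_def, hs_def]
        congr 1
        field_simp
      have hfin := aux_ineq b c c' θ s hb1 hbc' hcc' hc1 hs0 hθ0.le hsθ
      have h2C : (0:ℝ) ≤ 2*C := by linarith
      calc a ≤ 2*C*b*Real.exp (((M:ℝ)-1)*t₀) := hM0
        _ = 2*C*(b*(c/b)^s) := by rw [hexps]; ring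
        _ ≤ 2*C*(b^θ * c'^(1-θ)) := mul_le_mul_of_nonneg_left hfin h2C
  calc v mu x ≤ a := hma
    _ ≤ 2*C*(b^θ * c'^(1-θ)) := hkey
    _ = 2*C * b^θ * c'^(1-θ) := by ring
end

section
/- Let (X_N)_{N∈ℕ} be a projective spectrum of Hausdorff (LB)-spaces X_N = ind lim_n X_{N,n} (Banach steps) that is strongly reduced, i.e., for every N there exists M ≥ N with X_M contained in the closure of X = proj lim X_N inside X_N. If X is barrelled, then: ∀N ∃M≥N, n ∀K≥M, m ∃k, C>0 ∀y ∈ X'_N: ‖y‖*_{X_{M,m}} ≤ C(‖y‖*_{X_{N,n}} + ‖y‖*_{X_{K,k}}), where ‖y‖*_{X_{L,l}} = sup{ |⟨y,x⟩| : x ∈ X_{L,l}, ‖x‖_{X_{L,l}} ≤ 1 } ∈ [0,∞]. -/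
open Set Pointwise

/-- The projective limit of a spectrum `X` with linking maps `ρ`, realized as a submodule of
the product `∀ N, X N`. -/
def projLim (X : ℕ → Type) [∀ N, AddCommGroup (X N)] [∀ N, Module ℝ (X N)]
    [∀ N, TopologicalSpace (X N)] [∀ N, IsTopologicalAddGroup (X N)]
    [∀ N, ContinuousSMul ℝ (X N)]
    (ρ : ∀ ⦃N M : ℕ⦄, N ≤ M → (X M →L[ℝ] X N)) : Submodule ℝ (∀ N, X N) where
  carrier := {f | ∀ (N M : ℕ) (h : N ≤ M), ρ h (f M) = f N}
  add_mem' := by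
    intro a b ha hb N M h
    simp only [Pi.add_apply, map_add, ha N M h, hb N M h]
  zero_mem' := by
    intro N M h
    simp
  smul_mem' := by
    intro c a ha N M h
    simp only [Pi.smul_apply, map_smul, ha N M h]

/-- Separation of a point from a closed convex symmetric set, normalized form. -/
lemma sep_symm {E : Type} [AddCommGroup E] [Module ℝ E] [TopologicalSpace E]
    [IsTopologicalAddGroup E] [ContinuousSMul ℝ E] [LocallyConvexSpace ℝ E]
    {s : Set E} (hs₁ : Convex ℝ s) (hs₂ : IsClosed s) (hsym : ∀ a ∈ s, -a ∈ s)
    (h0 : (0 : E) ∈ s) {x : E} (hx : x ∉ s) :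
    ∃ f : E →L[ℝ] ℝ, (∀ a ∈ s, ‖f a‖ ≤ 1) ∧ 1 < f x := by
  obtain ⟨f, u, hfa, hux⟩ := geometric_hahn_banach_closed_point hs₁ hs₂ hx
  have hu : 0 < u := by simpa using hfa 0 h0
  refine ⟨u⁻¹ • f, ?_, ?_⟩
  · intro a ha
    have h1 : f a < u := hfa a ha
    have h2 : -f a < u := by
      have := hfa (-a) (hsym a ha)
      simpa using this
    have : |f a| ≤ u := abs_le.mpr ⟨by linarith, le_of_lt h1⟩
    simp only [ContinuousLinearMap.smul_apply, smul_eq_mul, Real.norm_eq_abs, abs_mul,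
      abs_inv, abs_of_pos hu]
    rw [inv_mul_le_iff₀ hu]
    simpa using this
  · have : 1 < u⁻¹ * f x := by
      rw [lt_inv_mul_iff₀ hu]
      simpa using hux
    simpa using this

set_option maxHeartbeats 1000000 in
theorem stmt15
    -- the spectrum of Hausdorff locally convex spaces
    (X : ℕ → Type) [∀ N, AddCommGroup (X N)] [∀ N, Module ℝ (X N)]
    [∀ N, TopologicalSpace (X N)] [∀ N, IsTopologicalAddGroup (X N)]
    [∀ N, ContinuousSMul ℝ (X N)] [∀ N, LocallyConvexSpace ℝ (X N)]
    [∀ N, T2Space (X N)]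
    -- linking maps (continuous inclusions), functorial and injective
    (ρ : ∀ ⦃N M : ℕ⦄, N ≤ M → (X M →L[ℝ] X N))
    (hρrefl : ∀ (N : ℕ) (z : X N), ρ (le_refl N) z = z)
    (hρcomp : ∀ (N M K : ℕ) (h₁ : N ≤ M) (h₂ : M ≤ K) (z : X K),
      ρ h₁ (ρ h₂ z) = ρ (h₁.trans h₂) z)
    (hρinj : ∀ (N M : ℕ) (h : N ≤ M), Function.Injective (ρ h))
    -- the Banach steps of each (LB)-space `X N`
    (Xs : ℕ → ℕ → Type) [∀ N n, NormedAddCommGroup (Xs N n)]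
    [∀ N n, NormedSpace ℝ (Xs N n)] [∀ N n, CompleteSpace (Xs N n)]
    (j : ∀ N n, Xs N n →L[ℝ] X N)
    (hjinj : ∀ N n, Function.Injective (j N n))
    (hcover : ∀ (N : ℕ) (z : X N), ∃ (n : ℕ) (u : Xs N n), j N n u = z)
    -- increasing steps: the inclusion `Xs N n ⊆ Xs N (n+1)` has norm at most one
    (hstep : ∀ N n, ∃ e : Xs N n →L[ℝ] Xs N (n + 1),
      (∀ u, ‖e u‖ ≤ ‖u‖) ∧ ∀ u, j N (n + 1) (e u) = j N n u)
    -- `X N` carries the inductive limit (finest locally convex) topology of its steps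
    (hind : ∀ (N : ℕ) (Y : Type) (_ : SeminormedAddCommGroup Y) (_ : @NormedSpace ℝ Y _ _)
      (u : X N →ₗ[ℝ] Y), (∀ n, Continuous fun z : Xs N n => u (j N n z)) → Continuous u)
    -- the spectrum is strongly reduced
    (hred : ∀ N : ℕ, ∃ M, ∃ h : N ≤ M, ∀ z : X M,
      ρ h z ∈ closure (Set.range fun f : projLim X ρ => (f : ∀ L, X L) N))
    -- the projective limit is barrelled
    (hbarrelled : BarrelledSpace ℝ (projLim X ρ)) :
    ∀ N : ℕ, ∃ M, ∃ hNM : N ≤ M, ∃ n : ℕ, ∀ K, ∀ hMK : M ≤ K, ∀ m : ℕ, ∃ k : ℕ,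
      ∃ C : ℝ, 0 < C ∧ ∀ y : X N →L[ℝ] ℝ,
        (⨆ (z : Xs M m) (_ : ‖z‖ ≤ 1), ENNReal.ofReal ‖y (ρ hNM (j M m z))‖) ≤
          ENNReal.ofReal C *
            ((⨆ (z : Xs N n) (_ : ‖z‖ ≤ 1), ENNReal.ofReal ‖y (ρ (le_refl N) (j N n z))‖) +
             (⨆ (z : Xs K k) (_ : ‖z‖ ≤ 1),
               ENNReal.ofReal ‖y (ρ (hNM.trans hMK) (j K k z))‖)) := by
  classical
  intro N
  -- the Banach "unit balls" in the steps, as subsets of the X L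
  -- Bs L l := j L l '' {v | ‖v‖ ≤ 1}
  -- basic properties of the balls
  have hB0 : ∀ L l, (0 : X L) ∈ j L l '' {v | ‖v‖ ≤ 1} :=
    fun L l => ⟨0, by simp, by simp⟩
  have hBneg : ∀ L l, ∀ a ∈ j L l '' {v | ‖v‖ ≤ 1}, -a ∈ j L l '' {v | ‖v‖ ≤ 1} := by
    rintro L l a ⟨v, hv, rfl⟩
    exact ⟨-v, by simpa using hv, by simp⟩
  have hBconv : ∀ L l, Convex ℝ (j L l '' {v | ‖v‖ ≤ 1}) := by
    intro L l
    have : {v : Xs L l | ‖v‖ ≤ 1} = Metric.closedBall 0 1 := by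
      ext v; simp [Metric.mem_closedBall, dist_zero_right]
    rw [this]
    exact (convex_closedBall (0 : Xs L l) 1).linear_image (j L l).toLinearMap
  -- monotonicity of the balls in the step index
  have hS : ∀ (L l l' : ℕ), l ≤ l' →
      (j L l '' {v | ‖v‖ ≤ 1}) ⊆ (j L l' '' {v | ‖v‖ ≤ 1}) := by
    intro L l l' hll'
    induction hll' with
    | refl => exact subset_rfl
    | step h ih =>
      intro a ha
      obtain ⟨v, hv, hva⟩ := ih ha
      obtain ⟨e, he1, he2⟩ := hstep L _
      exact ⟨e v, le_trans (he1 v) hv, by rw [he2 v, hva]⟩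
  -- scaled covering
  have hScaled : ∀ (L : ℕ) (zz : X L), ∃ (l : ℕ) (c : ℝ) (w : Xs L l),
      0 < c ∧ ‖w‖ ≤ 1 ∧ c • (j L l) w = zz := by
    intro L zz
    obtain ⟨l, v, hv⟩ := hcover L zz
    have hc : (0:ℝ) < ‖v‖ + 1 := by positivity
    refine ⟨l, ‖v‖ + 1, (‖v‖ + 1)⁻¹ • v, hc, ?_, ?_⟩
    · rw [norm_smul, norm_inv, Real.norm_eq_abs, abs_of_pos hc, inv_mul_le_iff₀ hc]
      linarith
    · rw [map_smul, smul_smul, mul_inv_cancel₀ (ne_of_gt hc), one_smul, hv]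
  -- the chain of levels given by strong reducedness
  obtain ⟨Wf, hWf1, hWf2⟩ : ∃ (Wf : ℕ → ℕ) (h1 : ∀ L, L ≤ Wf L), ∀ L (z : X (Wf L)),
      ρ (h1 L) z ∈ closure (Set.range fun f : projLim X ρ => (f : ∀ L', X L') L) := by
    choose Wf h1 h2 using hred
    exact ⟨Wf, h1, h2⟩
  set Mc : ℕ → ℕ := fun i => Nat.rec N (fun _ p => max (Wf p) (p + 1)) i with hMcdef
  have hMc0 : Mc 0 = N := rfl
  have hMcsucc : ∀ i, Mc i < Mc (i + 1) := by
    intro i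
    exact lt_of_lt_of_le (Nat.lt_succ_self _) (le_max_right _ _)
  have hMcmono : ∀ {i i'}, i ≤ i' → Mc i ≤ Mc i' := by
    intro i i' h
    induction h with
    | refl => exact le_rfl
    | step h ih => exact le_trans ih (le_of_lt (hMcsucc _))
  have hMcle : ∀ i, N ≤ Mc i := fun i => hMc0 ▸ hMcmono (Nat.zero_le i)
  have hMci : ∀ i, i ≤ Mc i := by
    intro i
    induction i with
    | zero => exact Nat.zero_le _
    | succ i ih => exact lt_of_le_of_lt ih (hMcsucc i)
  have hdens : ∀ i (z : X (Mc (i + 1))), ρ (le_of_lt (hMcsucc i)) z ∈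
      closure (Set.range fun f : projLim X ρ => (f : ∀ L', X L') (Mc i)) := by
    intro i z
    have hW : Wf (Mc i) ≤ Mc (i + 1) := le_max_left _ _
    have := hWf2 (Mc i) (ρ hW z)
    rwa [hρcomp _ _ _ (hWf1 (Mc i)) hW z] at this
  -- KEY pointwise localization
  have KEY : ∃ i : ℕ, ∀ K (hK : Mc i ≤ K) (zz : X (Mc i)), ∃ (k : ℕ) (c : ℝ), 0 < c ∧
      ρ (hMcle i) zz ∈ c • closure ((j N i '' {v | ‖v‖ ≤ 1}) +
        (ρ ((hMcle i).trans hK) '' (j K k '' {v | ‖v‖ ≤ 1}))) := by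
    by_contra hcon
    push_neg at hcon
    obtain ⟨Kc, hKc, zc, hfail⟩ : ∃ (Kc : ℕ → ℕ) (hKc : ∀ i, Mc i ≤ Kc i) (zc : ∀ i, X (Mc i)),
        ∀ i k (c : ℝ), 0 < c → ρ (hMcle i) (zc i) ∉ c • closure ((j N i '' {v | ‖v‖ ≤ 1}) +
          (ρ ((hMcle i).trans (hKc i)) '' (j (Kc i) k '' {v | ‖v‖ ≤ 1}))) := by
      choose Kc hKc zc hfail using hcon
      exact ⟨Kc, hKc, zc, hfail⟩
    -- separation functionals
    have hsep : ∀ i k : ℕ, ∃ g : X N →L[ℝ] ℝ,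
        (∀ w ∈ j N i '' {v | ‖v‖ ≤ 1}, ‖g w‖ ≤ 1) ∧
        (∀ w ∈ ρ ((hMcle i).trans (hKc i)) '' (j (Kc i) k '' {v | ‖v‖ ≤ 1}), ‖g w‖ ≤ 1) ∧
        (k : ℝ) < ‖g (ρ (hMcle i) (zc i))‖ := by
      intro i k
      have hk1 : (0:ℝ) < (k:ℝ) + 1 := by positivity
      have hsum0 : (0 : X N) ∈ (j N i '' {v | ‖v‖ ≤ 1}) +
          (ρ ((hMcle i).trans (hKc i)) '' (j (Kc i) k '' {v | ‖v‖ ≤ 1})) := by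
        have h0' : (0 : X N) ∈ ρ ((hMcle i).trans (hKc i)) '' (j (Kc i) k '' {v | ‖v‖ ≤ 1}) :=
          ⟨0, hB0 _ _, map_zero _⟩
        simpa using Set.add_mem_add (hB0 N i) h0'
      have hsumsym : ∀ a ∈ (j N i '' {v | ‖v‖ ≤ 1}) +
          (ρ ((hMcle i).trans (hKc i)) '' (j (Kc i) k '' {v | ‖v‖ ≤ 1})), -a ∈
          (j N i '' {v | ‖v‖ ≤ 1}) +
          (ρ ((hMcle i).trans (hKc i)) '' (j (Kc i) k '' {v | ‖v‖ ≤ 1})) := by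
        rintro a ha
        obtain ⟨b1, hb1, b2, hb2, rfl⟩ := ha
        obtain ⟨w2, hw2, rfl⟩ := hb2
        rw [neg_add, ← map_neg]
        exact Set.add_mem_add (hBneg N i b1 hb1)
          (Set.mem_image_of_mem _ (hBneg (Kc i) k w2 hw2))
      have hTconv : Convex ℝ (closure ((j N i '' {v | ‖v‖ ≤ 1}) +
          (ρ ((hMcle i).trans (hKc i)) '' (j (Kc i) k '' {v | ‖v‖ ≤ 1})))) :=
        ((hBconv N i).add ((hBconv (Kc i) k).linear_image
          (ρ ((hMcle i).trans (hKc i))).toLinearMap)).closure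
      have hT0 : (0 : X N) ∈ closure ((j N i '' {v | ‖v‖ ≤ 1}) +
          (ρ ((hMcle i).trans (hKc i)) '' (j (Kc i) k '' {v | ‖v‖ ≤ 1}))) :=
        subset_closure hsum0
      have hTsym : ∀ a ∈ closure ((j N i '' {v | ‖v‖ ≤ 1}) +
          (ρ ((hMcle i).trans (hKc i)) '' (j (Kc i) k '' {v | ‖v‖ ≤ 1}))), -a ∈
          closure ((j N i '' {v | ‖v‖ ≤ 1}) +
          (ρ ((hMcle i).trans (hKc i)) '' (j (Kc i) k '' {v | ‖v‖ ≤ 1}))) := by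
        intro a ha
        have h1 : -a ∈ (fun x : X N => -x) '' closure ((j N i '' {v | ‖v‖ ≤ 1}) +
            (ρ ((hMcle i).trans (hKc i)) '' (j (Kc i) k '' {v | ‖v‖ ≤ 1}))) := ⟨a, ha, rfl⟩
        have h2 := image_closure_subset_closure_image (f := fun x : X N => -x) continuous_neg
          (s := (j N i '' {v | ‖v‖ ≤ 1}) +
            (ρ ((hMcle i).trans (hKc i)) '' (j (Kc i) k '' {v | ‖v‖ ≤ 1})))
        have h3 : (fun x : X N => -x) '' ((j N i '' {v | ‖v‖ ≤ 1}) +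
            (ρ ((hMcle i).trans (hKc i)) '' (j (Kc i) k '' {v | ‖v‖ ≤ 1}))) ⊆
            (j N i '' {v | ‖v‖ ≤ 1}) +
            (ρ ((hMcle i).trans (hKc i)) '' (j (Kc i) k '' {v | ‖v‖ ≤ 1})) := by
          rintro _ ⟨b, hb, rfl⟩
          exact hsumsym b hb
        exact closure_mono h3 (h2 h1)
      have hCconv : Convex ℝ ((((k:ℝ)+1)) • closure ((j N i '' {v | ‖v‖ ≤ 1}) +
          (ρ ((hMcle i).trans (hKc i)) '' (j (Kc i) k '' {v | ‖v‖ ≤ 1})))) := hTconv.smul _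
      have hCclosed : IsClosed ((((k:ℝ)+1)) • closure ((j N i '' {v | ‖v‖ ≤ 1}) +
          (ρ ((hMcle i).trans (hKc i)) '' (j (Kc i) k '' {v | ‖v‖ ≤ 1})))) :=
        isClosed_closure.smul_of_ne_zero (ne_of_gt hk1)
      have hCsym : ∀ a ∈ (((k:ℝ)+1)) • closure ((j N i '' {v | ‖v‖ ≤ 1}) +
          (ρ ((hMcle i).trans (hKc i)) '' (j (Kc i) k '' {v | ‖v‖ ≤ 1}))), -a ∈
          (((k:ℝ)+1)) • closure ((j N i '' {v | ‖v‖ ≤ 1}) +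
          (ρ ((hMcle i).trans (hKc i)) '' (j (Kc i) k '' {v | ‖v‖ ≤ 1}))) := by
        rintro a ⟨b, hb, rfl⟩
        exact ⟨-b, hTsym b hb, by simp⟩
      have hC0 : (0 : X N) ∈ (((k:ℝ)+1)) • closure ((j N i '' {v | ‖v‖ ≤ 1}) +
          (ρ ((hMcle i).trans (hKc i)) '' (j (Kc i) k '' {v | ‖v‖ ≤ 1}))) :=
        ⟨0, hT0, smul_zero _⟩
      have hxC : ρ (hMcle i) (zc i) ∉ (((k:ℝ)+1)) • closure ((j N i '' {v | ‖v‖ ≤ 1}) +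
          (ρ ((hMcle i).trans (hKc i)) '' (j (Kc i) k '' {v | ‖v‖ ≤ 1}))) :=
        hfail i k _ hk1
      obtain ⟨f, hf1, hf2⟩ := sep_symm hCconv hCclosed hCsym hC0 hxC
      refine ⟨(((k:ℝ)+1)) • f, ?_, ?_, ?_⟩
      · intro w hw
        have hwS : w ∈ (j N i '' {v | ‖v‖ ≤ 1}) +
            (ρ ((hMcle i).trans (hKc i)) '' (j (Kc i) k '' {v | ‖v‖ ≤ 1})) := by
          have h0' : (0 : X N) ∈ ρ ((hMcle i).trans (hKc i)) '' (j (Kc i) k '' {v | ‖v‖ ≤ 1}) :=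
            ⟨0, hB0 _ _, map_zero _⟩
          simpa using Set.add_mem_add hw h0'
        have := hf1 _ (Set.smul_mem_smul_set (subset_closure hwS))
        rw [map_smul] at this
        simpa [ContinuousLinearMap.smul_apply] using this
      · intro w hw
        have hwS : w ∈ (j N i '' {v | ‖v‖ ≤ 1}) +
            (ρ ((hMcle i).trans (hKc i)) '' (j (Kc i) k '' {v | ‖v‖ ≤ 1})) := by
          simpa using Set.add_mem_add (hB0 N i) hw
        have := hf1 _ (Set.smul_mem_smul_set (subset_closure hwS))
        rw [map_smul] at this
        simpa [ContinuousLinearMap.smul_apply] using this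
      · have h1 : ((k:ℝ)) < ((k:ℝ)+1) * f (ρ (hMcle i) (zc i)) := by nlinarith [hf2]
        have h2 : ((k:ℝ)+1) * f (ρ (hMcle i) (zc i)) ≤
            ‖((k:ℝ)+1) * f (ρ (hMcle i) (zc i))‖ := by
          rw [Real.norm_eq_abs]; exact le_abs_self _
        have : (k:ℝ) < ‖((k:ℝ)+1) * f (ρ (hMcle i) (zc i))‖ := lt_of_lt_of_le h1 h2
        simpa [ContinuousLinearMap.smul_apply] using this
    choose g hg1 hg2 hg3 using hsep
    haveI := hbarrelled
    -- coordinates of elements of the projective limit are compatible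
    have hcoord : ∀ (f : projLim X ρ) (a b : ℕ) (hab : a ≤ b),
        ρ hab ((f : ∀ L', X L') b) = (f : ∀ L', X L') a := fun f a b hab => f.2 a b hab
    -- pointwise boundedness of the family of functionals on the projective limit
    have hPB : ∀ f : projLim X ρ,
        BddAbove (Set.range fun q : ℕ × ℕ => ‖g q.1 q.2 ((f : ∀ L', X L') N)‖) := by
      intro f
      obtain ⟨nf, c0, w0, hc0, hw0, hfN⟩ := hScaled N ((f : ∀ L', X L') N)
      choose kk cc ww hcc hww hfK using fun i => hScaled (Kc i) ((f : ∀ L', X L') (Kc i))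
      set B := c0 + ∑ i ∈ Finset.range nf,
        (cc i + ∑ k ∈ Finset.range (kk i), ‖g i k ((f : ∀ L', X L') N)‖) with hB
      have hsumnonneg : ∀ i, 0 ≤ cc i + ∑ k ∈ Finset.range (kk i),
          ‖g i k ((f : ∀ L', X L') N)‖ := by
        intro i
        have : (0:ℝ) ≤ ∑ k ∈ Finset.range (kk i), ‖g i k ((f : ∀ L', X L') N)‖ :=
          Finset.sum_nonneg fun _ _ => norm_nonneg _
        have := hcc i
        linarith
      have hSig : (0:ℝ) ≤ ∑ i ∈ Finset.range nf,
          (cc i + ∑ k ∈ Finset.range (kk i), ‖g i k ((f : ∀ L', X L') N)‖) :=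
        Finset.sum_nonneg fun i _ => hsumnonneg i
      refine ⟨B, ?_⟩
      rintro x ⟨⟨i, k⟩, rfl⟩
      simp only
      by_cases hi : nf ≤ i
      · -- route through level N
        have hmem : (j N nf) w0 ∈ j N i '' {v | ‖v‖ ≤ 1} := hS N nf i hi ⟨w0, hw0, rfl⟩
        have hb := hg1 i k _ hmem
        have heq : ‖g i k ((f : ∀ L', X L') N)‖ = c0 * ‖g i k (j N nf w0)‖ := by
          rw [← hfN, map_smul, norm_smul, Real.norm_eq_abs, abs_of_pos hc0]
        have : ‖g i k ((f : ∀ L', X L') N)‖ ≤ c0 := by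
          rw [heq]
          calc c0 * ‖g i k (j N nf w0)‖ ≤ c0 * 1 :=
                mul_le_mul_of_nonneg_left hb (le_of_lt hc0)
            _ = c0 := mul_one c0
        rw [hB]; linarith
      · push_neg at hi
        have hiB : (cc i + ∑ k' ∈ Finset.range (kk i), ‖g i k' ((f : ∀ L', X L') N)‖) ≤
            ∑ i' ∈ Finset.range nf,
              (cc i' + ∑ k' ∈ Finset.range (kk i'), ‖g i' k' ((f : ∀ L', X L') N)‖) :=
          Finset.single_le_sum (fun i' _ => hsumnonneg i') (Finset.mem_range.mpr hi)
        by_cases hk : kk i ≤ k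
        · -- route through level K i
          have hrep : ρ ((hMcle i).trans (hKc i)) ((f : ∀ L', X L') (Kc i)) =
              (f : ∀ L', X L') N := hcoord f N (Kc i) _
          have hmem : ρ ((hMcle i).trans (hKc i)) (j (Kc i) (kk i) (ww i)) ∈
              ρ ((hMcle i).trans (hKc i)) '' (j (Kc i) k '' {v | ‖v‖ ≤ 1}) :=
            Set.mem_image_of_mem _ (hS (Kc i) (kk i) k hk ⟨ww i, hww i, rfl⟩)
          have hb := hg2 i k _ hmem
          have heq : ‖g i k ((f : ∀ L', X L') N)‖ =
              cc i * ‖g i k (ρ ((hMcle i).trans (hKc i)) (j (Kc i) (kk i) (ww i)))‖ := by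
            rw [← hrep, ← hfK i, map_smul, map_smul, norm_smul, Real.norm_eq_abs,
              abs_of_pos (hcc i)]
          have hle : ‖g i k ((f : ∀ L', X L') N)‖ ≤ cc i := by
            rw [heq]
            calc cc i * ‖g i k (ρ ((hMcle i).trans (hKc i)) (j (Kc i) (kk i) (ww i)))‖ ≤
                cc i * 1 := mul_le_mul_of_nonneg_left hb (le_of_lt (hcc i))
              _ = cc i := mul_one _
          have hccle : cc i ≤ cc i + ∑ k' ∈ Finset.range (kk i),
              ‖g i k' ((f : ∀ L', X L') N)‖ := by
            have : (0:ℝ) ≤ ∑ k' ∈ Finset.range (kk i), ‖g i k' ((f : ∀ L', X L') N)‖ :=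
              Finset.sum_nonneg fun _ _ => norm_nonneg _
            linarith
          rw [hB]
          linarith
        · push_neg at hk
          have h1 : ‖g i k ((f : ∀ L', X L') N)‖ ≤
              ∑ k' ∈ Finset.range (kk i), ‖g i k' ((f : ∀ L', X L') N)‖ :=
            Finset.single_le_sum (f := fun k' => ‖g i k' ((f : ∀ L', X L') N)‖)
              (fun _ _ => norm_nonneg _) (Finset.mem_range.mpr hk)
          have h2 : ∑ k' ∈ Finset.range (kk i), ‖g i k' ((f : ∀ L', X L') N)‖ ≤
              cc i + ∑ k' ∈ Finset.range (kk i), ‖g i k' ((f : ∀ L', X L') N)‖ := by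
            have := hcc i; linarith
          rw [hB]
          linarith
    -- the Banach--Steinhaus / barrelledness step
    obtain ⟨Wopen, hWopen, hW0, hWprop⟩ : ∃ Wset : Set ↥(projLim X ρ), IsOpen Wset ∧
        (0 : ↥(projLim X ρ)) ∈ Wset ∧
        ∀ f ∈ Wset, ∀ q : ℕ × ℕ, ‖g q.1 q.2 ((f : ∀ L', X L') N)‖ ≤ 1 := by
      set πN : ↥(projLim X ρ) →L[ℝ] X N :=
        (ContinuousLinearMap.proj N).comp (projLim X ρ).subtypeL with hπN
      set pfam : ℕ × ℕ → Seminorm ℝ ↥(projLim X ρ) := fun q =>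
        (normSeminorm ℝ ℝ).comp ((g q.1 q.2).comp πN).toLinearMap with hpfam
      have happly : ∀ (q : ℕ × ℕ) (f : ↥(projLim X ρ)),
          pfam q f = ‖g q.1 q.2 ((f : ∀ L', X L') N)‖ := by
        intro q f
        simp only [hpfam, Seminorm.comp_apply, coe_normSeminorm,
          ContinuousLinearMap.coe_coe, ContinuousLinearMap.comp_apply]
        rfl
      have hbdd : BddAbove (Set.range pfam) := by
        rw [Seminorm.bddAbove_range_iff]
        intro f
        have h' := hPB f
        have : (fun q : ℕ × ℕ => pfam q f) = fun q : ℕ × ℕ =>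
            ‖g q.1 q.2 ((f : ∀ L', X L') N)‖ := funext fun q => happly q f
        rw [this]
        exact h'
      have hbddpt : ∀ f : ↥(projLim X ρ), BddAbove (Set.range fun q : ℕ × ℕ => pfam q f) := by
        intro f
        have h' := hPB f
        have : (fun q : ℕ × ℕ => pfam q f) = fun q : ℕ × ℕ =>
            ‖g q.1 q.2 ((f : ∀ L', X L') N)‖ := funext fun q => happly q f
        rw [this]
        exact h'
      have hcont : Continuous (⨆ q, ⇑(pfam q)) := by
        refine Seminorm.continuous_iSup pfam (fun q => ?_) hbdd
        have : ⇑(pfam q) = fun f : ↥(projLim X ρ) => ‖g q.1 q.2 ((f : ∀ L', X L') N)‖ :=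
          funext fun f => happly q f
        rw [this]
        exact (((g q.1 q.2).comp πN).continuous).norm
      refine ⟨(⨆ q, ⇑(pfam q)) ⁻¹' Set.Iio 1, hcont.isOpen_preimage _ isOpen_Iio, ?_, ?_⟩
      · show (⨆ q, ⇑(pfam q)) 0 < 1
        have h0 : (⨆ q, ⇑(pfam q)) 0 = (0:ℝ) := by
          rw [iSup_apply]
          simp only [map_zero]
          exact ciSup_const
        rw [h0]
        norm_num
      · intro f hf q
        have hle : pfam q f ≤ (⨆ q', ⇑(pfam q')) f := by
          rw [iSup_apply]
          exact le_ciSup (hbddpt f) q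
        have : pfam q f < 1 := lt_of_le_of_lt hle hf
        rw [happly] at this
        exact le_of_lt this
    -- extract a basic neighborhood in the product
    obtain ⟨t, ht, hsub⟩ := mem_nhds_subtype (projLim X ρ : Set (∀ L', X L'))
      (0 : ↥(projLim X ρ)) Wopen |>.mp (hWopen.mem_nhds hW0)
    obtain ⟨O, hOsub, hOopen, hO0⟩ := mem_nhds_iff.mp ht
    obtain ⟨I, u, hu, hIsub⟩ := isOpen_pi_iff.mp hOopen _ hO0
    set L0 := I.sup id with hL0
    have hiA : ∀ i' ∈ I, i' ≤ Mc L0 := fun i' hi' =>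
      le_trans (Finset.le_sup (f := id) hi') (hMci L0)
    set U : Set (X (Mc L0)) := ⋂ (i' : ℕ) (_ : i' ∈ I),
      (if h : i' ≤ Mc L0 then ρ h ⁻¹' (u i') else Set.univ) with hU
    have hUopen : IsOpen U := by
      refine isOpen_biInter_finset fun i' hi' => ?_
      rw [dif_pos (hiA i' hi')]
      exact (hu i' hi').1.preimage (ρ (hiA i' hi')).continuous
    have hU0 : (0 : X (Mc L0)) ∈ U := by
      refine Set.mem_iInter₂.mpr fun i' hi' => ?_
      rw [dif_pos (hiA i' hi')]
      have := (hu i' hi').2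
      simpa using this
    have hUprop : ∀ f : ↥(projLim X ρ), (f : ∀ L', X L') (Mc L0) ∈ U →
        ∀ q : ℕ × ℕ, ‖g q.1 q.2 ((f : ∀ L', X L') N)‖ ≤ 1 := by
      intro f hfU q
      refine hWprop f (hsub ?_) q
      refine Set.mem_preimage.mpr (hOsub (hIsub ?_))
      refine Set.mem_pi.mpr fun i' hi' => ?_
      have h1 := Set.mem_iInter₂.mp hfU i' hi'
      rw [dif_pos (hiA i' hi'), Set.mem_preimage] at h1
      have h2 : ρ (hiA i' hi') ((f : ∀ L', X L') (Mc L0)) = (f : ∀ L', X L') i' :=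
        hcoord f i' (Mc L0) (hiA i' hi')
      rwa [h2] at h1
    -- now derive a contradiction using the density of the projective limit
    have hwcl : ρ (le_of_lt (hMcsucc L0)) (zc (L0 + 1)) ∈
        closure (Set.range fun f : projLim X ρ => (f : ∀ L', X L') (Mc L0)) :=
      hdens L0 (zc (L0 + 1))
    have habs : ∃ t0 : ℝ, 0 < t0 ∧ t0 • (ρ (le_of_lt (hMcsucc L0)) (zc (L0 + 1))) ∈ U := by
      have hconts : Continuous fun t' : ℝ => t' • (ρ (le_of_lt (hMcsucc L0)) (zc (L0 + 1))) :=
        continuous_id.smul continuous_const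
      have h0' : (fun t' : ℝ => t' • (ρ (le_of_lt (hMcsucc L0)) (zc (L0 + 1)))) 0 = 0 :=
        zero_smul ℝ _
      have hpre : (fun t' : ℝ => t' • (ρ (le_of_lt (hMcsucc L0)) (zc (L0 + 1)))) ⁻¹' U ∈
          nhds (0 : ℝ) := by
        refine hconts.continuousAt.preimage_mem_nhds ?_
        simp only [zero_smul]
        exact hUopen.mem_nhds hU0
      obtain ⟨δ, hδ, hball⟩ := Metric.mem_nhds_iff.mp hpre
      refine ⟨δ / 2, by linarith, hball ?_⟩
      simp only [Metric.mem_ball, Real.dist_eq, sub_zero]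
      rw [abs_of_pos (by linarith : (0:ℝ) < δ / 2)]
      linarith
    obtain ⟨t0, ht0, ht0U⟩ := habs
    have hvcl : t0 • (ρ (le_of_lt (hMcsucc L0)) (zc (L0 + 1))) ∈
        closure (Set.range fun f : projLim X ρ => (f : ∀ L', X L') (Mc L0)) := by
      have h1 : t0 • (ρ (le_of_lt (hMcsucc L0)) (zc (L0 + 1))) ∈
          t0 • closure (Set.range fun f : projLim X ρ => (f : ∀ L', X L') (Mc L0)) :=
        Set.smul_mem_smul_set hwcl
      have h2 := smul_closure_subset t0
        (Set.range fun f : projLim X ρ => (f : ∀ L', X L') (Mc L0))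
      have h3 : t0 • (Set.range fun f : projLim X ρ => (f : ∀ L', X L') (Mc L0)) ⊆
          (Set.range fun f : projLim X ρ => (f : ∀ L', X L') (Mc L0)) := by
        rintro _ ⟨r, ⟨fr, rfl⟩, rfl⟩
        exact ⟨t0 • fr, by simp⟩
      exact closure_mono h3 (h2 h1)
    have hvZ : t0 • (ρ (le_of_lt (hMcsucc L0)) (zc (L0 + 1))) ∈
        closure (U ∩ (Set.range fun f : projLim X ρ => (f : ∀ L', X L') (Mc L0))) :=
      hUopen.inter_closure ⟨ht0U, hvcl⟩
    have hZclosed : IsClosed {a : X (Mc L0) | ∀ k : ℕ,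
        ‖g (L0 + 1) k (ρ (hMcle L0) a)‖ ≤ 1} := by
      have : {a : X (Mc L0) | ∀ k : ℕ, ‖g (L0 + 1) k (ρ (hMcle L0) a)‖ ≤ 1} =
          ⋂ k : ℕ, {a : X (Mc L0) | ‖g (L0 + 1) k (ρ (hMcle L0) a)‖ ≤ 1} := by
        ext a; simp
      rw [this]
      refine isClosed_iInter fun k => ?_
      exact isClosed_le (((g (L0 + 1) k).continuous.comp (ρ (hMcle L0)).continuous).norm)
        continuous_const
    have hsubZ : U ∩ (Set.range fun f : projLim X ρ => (f : ∀ L', X L') (Mc L0)) ⊆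
        {a : X (Mc L0) | ∀ k : ℕ, ‖g (L0 + 1) k (ρ (hMcle L0) a)‖ ≤ 1} := by
      rintro a ⟨haU, ⟨fa, rfl⟩⟩ 
      intro k
      have h1 := hUprop fa haU (L0 + 1, k)
      have h2 : ρ (hMcle L0) ((fa : ∀ L', X L') (Mc L0)) = (fa : ∀ L', X L') N :=
        hcoord fa N (Mc L0) (hMcle L0)
      rw [h2]
      exact h1
    have hvZ2 : ∀ k : ℕ, ‖g (L0 + 1) k (ρ (hMcle L0)
        (t0 • (ρ (le_of_lt (hMcsucc L0)) (zc (L0 + 1)))))‖ ≤ 1 :=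
      (closure_minimal hsubZ hZclosed) hvZ
    -- rewrite and contradict the separation property
    have hxrw : ρ (hMcle L0) (t0 • (ρ (le_of_lt (hMcsucc L0)) (zc (L0 + 1)))) =
        t0 • (ρ (hMcle (L0 + 1)) (zc (L0 + 1))) := by
      rw [map_smul, hρcomp N (Mc L0) (Mc (L0 + 1)) (hMcle L0) (le_of_lt (hMcsucc L0))]
    obtain ⟨kbig, hkbig⟩ := exists_nat_ge (1 / t0)
    have h1 := hvZ2 kbig
    rw [hxrw, map_smul, norm_smul, Real.norm_eq_abs, abs_of_pos ht0] at h1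
    have h2 := hg3 (L0 + 1) kbig
    have h3 : ‖g (L0 + 1) kbig (ρ (hMcle (L0 + 1)) (zc (L0 + 1)))‖ ≤ 1 / t0 := by
      rw [le_div_iff₀ ht0]
      linarith
    linarith
  -- now harvest the KEY statement
  obtain ⟨n, hKEY⟩ := KEY
  refine ⟨Mc n, hMcle n, n, ?_⟩
  intro K hMK m
  -- generic properties of the target sets
  have hTconvK : ∀ k : ℕ, Convex ℝ (closure ((j N n '' {v | ‖v‖ ≤ 1}) +
      (ρ ((hMcle n).trans hMK) '' (j K k '' {v | ‖v‖ ≤ 1})))) := fun k =>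
    ((hBconv N n).add ((hBconv K k).linear_image
      (ρ ((hMcle n).trans hMK)).toLinearMap)).closure
  have hT0K : ∀ k : ℕ, (0 : X N) ∈ closure ((j N n '' {v | ‖v‖ ≤ 1}) +
      (ρ ((hMcle n).trans hMK) '' (j K k '' {v | ‖v‖ ≤ 1}))) := by
    intro k
    refine subset_closure ?_
    have h0' : (0 : X N) ∈ ρ ((hMcle n).trans hMK) '' (j K k '' {v | ‖v‖ ≤ 1}) :=
      ⟨0, hB0 _ _, map_zero _⟩
    simpa using Set.add_mem_add (hB0 N n) h0'
  have hTsymK : ∀ k : ℕ, ∀ a ∈ closure ((j N n '' {v | ‖v‖ ≤ 1}) +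
      (ρ ((hMcle n).trans hMK) '' (j K k '' {v | ‖v‖ ≤ 1}))), -a ∈
      closure ((j N n '' {v | ‖v‖ ≤ 1}) +
      (ρ ((hMcle n).trans hMK) '' (j K k '' {v | ‖v‖ ≤ 1}))) := by
    intro k a ha
    have h1 : -a ∈ (fun x : X N => -x) '' closure ((j N n '' {v | ‖v‖ ≤ 1}) +
        (ρ ((hMcle n).trans hMK) '' (j K k '' {v | ‖v‖ ≤ 1}))) := ⟨a, ha, rfl⟩
    have h2 := image_closure_subset_closure_image (f := fun x : X N => -x) continuous_neg
      (s := (j N n '' {v | ‖v‖ ≤ 1}) + (ρ ((hMcle n).trans hMK) '' (j K k '' {v | ‖v‖ ≤ 1})))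
    have h3 : (fun x : X N => -x) '' ((j N n '' {v | ‖v‖ ≤ 1}) +
        (ρ ((hMcle n).trans hMK) '' (j K k '' {v | ‖v‖ ≤ 1}))) ⊆
        (j N n '' {v | ‖v‖ ≤ 1}) +
        (ρ ((hMcle n).trans hMK) '' (j K k '' {v | ‖v‖ ≤ 1})) := by
      rintro _ ⟨b, hb, rfl⟩
      obtain ⟨b1, hb1, b2, hb2, rfl⟩ := hb
      obtain ⟨w2, hw2, rfl⟩ := hb2
      show -(b1 + ρ ((hMcle n).trans hMK) w2) ∈ _
      rw [neg_add, ← map_neg]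
      exact Set.add_mem_add (hBneg N n b1 hb1)
        (Set.mem_image_of_mem _ (hBneg K k w2 hw2))
    exact closure_mono h3 (h2 h1)
  -- scaling monotonicity
  have hsmul_sub : ∀ (T : Set (X N)), Convex ℝ T → (0:X N) ∈ T → ∀ (c c' : ℝ),
      0 < c → c ≤ c' → c • T ⊆ c' • T := by
    intro T hconv h0 c c' hc hcc'
    rintro x ⟨a, ha, rfl⟩
    have hc' : (0:ℝ) < c' := lt_of_lt_of_le hc hcc'
    refine ⟨(c / c') • a, ?_, ?_⟩
    · have h01 : (0:ℝ) ≤ c / c' := by positivity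
      have h11 : c / c' ≤ 1 := by rw [div_le_one hc']; exact hcc'
      have := hconv h0 ha (by linarith : (0:ℝ) ≤ 1 - c/c') h01 (by ring)
      simpa using this
    · show c' • ((c / c') • a) = c • a
      rw [smul_smul]
      congr 1
      field_simp
  -- the Baire category argument in the Banach step
  haveI : Nonempty (Xs (Mc n) m) := ⟨0⟩
  obtain ⟨q0, x0, hx0⟩ : ∃ (q : ℕ × ℕ) (x0 : Xs (Mc n) m), x0 ∈ interior
      ((fun uu : Xs (Mc n) m => ρ (hMcle n) (j (Mc n) m uu)) ⁻¹'
        (((q.2:ℝ)+1) • closure ((j N n '' {v | ‖v‖ ≤ 1}) +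
          (ρ ((hMcle n).trans hMK) '' (j K q.1 '' {v | ‖v‖ ≤ 1}))))) := by
    have hcov : (⋃ q : ℕ × ℕ, (fun uu : Xs (Mc n) m => ρ (hMcle n) (j (Mc n) m uu)) ⁻¹'
        (((q.2:ℝ)+1) • closure ((j N n '' {v | ‖v‖ ≤ 1}) +
          (ρ ((hMcle n).trans hMK) '' (j K q.1 '' {v | ‖v‖ ≤ 1}))))) = Set.univ := by
      rw [Set.eq_univ_iff_forall]
      intro uu
      obtain ⟨k, c, hc, hmem⟩ := hKEY K hMK (j (Mc n) m uu)
      rw [Set.mem_iUnion]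
      refine ⟨(k, ⌈c⌉₊), ?_⟩
      refine Set.mem_preimage.mpr ?_
      refine hsmul_sub _ (hTconvK k) (hT0K k) c ((⌈c⌉₊:ℝ)+1) hc ?_ hmem
      have := Nat.le_ceil c
      linarith
    obtain ⟨q, hq⟩ := nonempty_interior_of_iUnion_of_closed (X := Xs (Mc n) m)
      (f := fun q : ℕ × ℕ => (fun uu : Xs (Mc n) m => ρ (hMcle n) (j (Mc n) m uu)) ⁻¹'
        (((q.2:ℝ)+1) • closure ((j N n '' {v | ‖v‖ ≤ 1}) +
          (ρ ((hMcle n).trans hMK) '' (j K q.1 '' {v | ‖v‖ ≤ 1})))))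
      (fun q => (isClosed_closure.smul_of_ne_zero
        (by positivity : ((q.2:ℝ)+1) ≠ 0)).preimage
        ((ρ (hMcle n)).continuous.comp (j (Mc n) m).continuous))
      hcov
    obtain ⟨x0, hx0⟩ := hq
    exact ⟨q, x0, hx0⟩
  obtain ⟨ε, hε, hball⟩ := Metric.mem_nhds_iff.mp (mem_interior_iff_mem_nhds.mp hx0)
  -- the midpoint trick : a ball centred at zero also works
  have hmid : ∀ v : Xs (Mc n) m, ‖v‖ < ε → ρ (hMcle n) (j (Mc n) m v) ∈
      ((q0.2:ℝ)+1) • closure ((j N n '' {v | ‖v‖ ≤ 1}) +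
        (ρ ((hMcle n).trans hMK) '' (j K q0.1 '' {v | ‖v‖ ≤ 1}))) := by
    intro v hv
    have h1 : x0 + v ∈ (fun uu : Xs (Mc n) m => ρ (hMcle n) (j (Mc n) m uu)) ⁻¹'
        (((q0.2:ℝ)+1) • closure ((j N n '' {v | ‖v‖ ≤ 1}) +
          (ρ ((hMcle n).trans hMK) '' (j K q0.1 '' {v | ‖v‖ ≤ 1})))) := by
      refine hball ?_
      simp only [Metric.mem_ball, dist_eq_norm]
      simpa using hv
    have h2 : x0 - v ∈ (fun uu : Xs (Mc n) m => ρ (hMcle n) (j (Mc n) m uu)) ⁻¹'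
        (((q0.2:ℝ)+1) • closure ((j N n '' {v | ‖v‖ ≤ 1}) +
          (ρ ((hMcle n).trans hMK) '' (j K q0.1 '' {v | ‖v‖ ≤ 1})))) := by
      refine hball ?_
      simp only [Metric.mem_ball, dist_eq_norm]
      simpa using hv
    obtain ⟨a, ha, hEa0⟩ := Set.mem_preimage.mp h1
    obtain ⟨b, hb, hEb0⟩ := Set.mem_preimage.mp h2
    have hEa : ((q0.2:ℝ)+1) • a = ρ (hMcle n) (j (Mc n) m (x0 + v)) := hEa0
    have hEb : ((q0.2:ℝ)+1) • b = ρ (hMcle n) (j (Mc n) m (x0 - v)) := hEb0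
    have hmidT : (1/2 : ℝ) • a + (1/2 : ℝ) • (-b) ∈
        closure ((j N n '' {v | ‖v‖ ≤ 1}) +
          (ρ ((hMcle n).trans hMK) '' (j K q0.1 '' {v | ‖v‖ ≤ 1}))) :=
      hTconvK q0.1 ha (hTsymK q0.1 b hb) (by norm_num) (by norm_num) (by norm_num)
    refine ⟨(1/2 : ℝ) • a + (1/2 : ℝ) • (-b), hmidT, ?_⟩
    show ((q0.2:ℝ)+1) • ((1/2 : ℝ) • a + (1/2 : ℝ) • (-b)) = ρ (hMcle n) (j (Mc n) m v)
    have hvv : (1/2:ℝ) • (x0 + v) - (1/2:ℝ) • (x0 - v) = v := by module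
    calc ((q0.2:ℝ)+1) • ((1/2 : ℝ) • a + (1/2 : ℝ) • (-b))
        = (1/2:ℝ) • (((q0.2:ℝ)+1) • a) - (1/2:ℝ) • (((q0.2:ℝ)+1) • b) := by module
      _ = (1/2:ℝ) • (ρ (hMcle n) (j (Mc n) m (x0 + v))) -
          (1/2:ℝ) • (ρ (hMcle n) (j (Mc n) m (x0 - v))) := by rw [hEa, hEb]
      _ = ρ (hMcle n) (j (Mc n) m ((1/2:ℝ) • (x0 + v) - (1/2:ℝ) • (x0 - v))) := by
          simp only [map_sub, map_smul]
      _ = ρ (hMcle n) (j (Mc n) m v) := by rw [hvv]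
  -- final constant
  refine ⟨q0.1, (2/ε) * ((q0.2:ℝ)+1), by positivity, ?_⟩
  intro y
  set S1 := ⨆ (z : Xs N n) (_ : ‖z‖ ≤ 1), ENNReal.ofReal ‖y (ρ (le_refl N) (j N n z))‖ with hS1
  set S2 := ⨆ (z : Xs K q0.1) (_ : ‖z‖ ≤ 1),
    ENNReal.ofReal ‖y (ρ ((hMcle n).trans hMK) (j K q0.1 z))‖ with hS2
  by_cases htop : S1 = ⊤ ∨ S2 = ⊤
  · have hRHS : ENNReal.ofReal ((2/ε) * ((q0.2:ℝ)+1)) * (S1 + S2) = ⊤ := by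
      have hne : ENNReal.ofReal ((2/ε) * ((q0.2:ℝ)+1)) ≠ 0 := by
        rw [← ENNReal.ofReal_zero]
        intro hcontra
        have h2 : (0:ℝ) < (2/ε) * ((q0.2:ℝ)+1) := by positivity
        rw [ENNReal.ofReal_eq_ofReal_iff (le_of_lt h2) le_rfl] at hcontra
        linarith
      have hsumtop : S1 + S2 = ⊤ := by
        rcases htop with h | h
        · simp [h]
        · simp [h]
      rw [hsumtop]
      exact ENNReal.mul_top hne
    rw [hRHS]
    exact le_top
  · push_neg at htop
    obtain ⟨hS1top, hS2top⟩ := htop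
    have hs1 : (0:ℝ) ≤ S1.toReal := ENNReal.toReal_nonneg
    have hs2 : (0:ℝ) ≤ S2.toReal := ENNReal.toReal_nonneg
    have hbound1 : ∀ w ∈ j N n '' {v | ‖v‖ ≤ 1}, ‖y w‖ ≤ S1.toReal := by
      rintro w ⟨v, hv, rfl⟩
      have h1 : ENNReal.ofReal ‖y (ρ (le_refl N) (j N n v))‖ ≤ S1 := by
        rw [hS1]
        exact le_iSup₂ (f := fun (z : Xs N n) (_ : ‖z‖ ≤ 1) =>
          ENNReal.ofReal ‖y (ρ (le_refl N) (j N n z))‖) v hv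
      rw [hρrefl N (j N n v)] at h1
      exact (ENNReal.ofReal_le_iff_le_toReal hS1top).mp h1
    have hbound2 : ∀ w ∈ ρ ((hMcle n).trans hMK) '' (j K q0.1 '' {v | ‖v‖ ≤ 1}),
        ‖y w‖ ≤ S2.toReal := by
      rintro w ⟨w', ⟨v, hv, rfl⟩, rfl⟩
      have h1 : ENNReal.ofReal ‖y (ρ ((hMcle n).trans hMK) (j K q0.1 v))‖ ≤ S2 := by
        rw [hS2]
        exact le_iSup₂ (f := fun (z : Xs K q0.1) (_ : ‖z‖ ≤ 1) =>
          ENNReal.ofReal ‖y (ρ ((hMcle n).trans hMK) (j K q0.1 z))‖) v hv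
      exact (ENNReal.ofReal_le_iff_le_toReal hS2top).mp h1
    have hboundT : ∀ a ∈ closure ((j N n '' {v | ‖v‖ ≤ 1}) +
        (ρ ((hMcle n).trans hMK) '' (j K q0.1 '' {v | ‖v‖ ≤ 1}))),
        ‖y a‖ ≤ S1.toReal + S2.toReal := by
      intro a ha
      have hclosed : IsClosed {x : X N | ‖y x‖ ≤ S1.toReal + S2.toReal} :=
        isClosed_le y.continuous.norm continuous_const
      refine closure_minimal ?_ hclosed ha
      rintro x ⟨b1, hb1, b2, hb2, rfl⟩
      have := norm_add_le (y b1) (y b2)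
      have e1 := hbound1 b1 hb1
      have e2 := hbound2 b2 hb2
      simp only [Set.mem_setOf_eq, map_add]
      linarith
    -- final computation
    refine iSup₂_le fun z hz => ?_
    have hz' : ‖(ε/2) • z‖ < ε := by
      rw [norm_smul, Real.norm_eq_abs, abs_of_pos (by linarith : (0:ℝ) < ε/2)]
      nlinarith
    obtain ⟨a, ha, hEq0⟩ := hmid ((ε/2) • z) hz'
    have hEq : ((q0.2:ℝ)+1) • a = ρ (hMcle n) (j (Mc n) m ((ε/2) • z)) := hEq0
    have hyz : ρ (hMcle n) (j (Mc n) m z) = ((2/ε) * ((q0.2:ℝ)+1)) • a := by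
      have h1 : ρ (hMcle n) (j (Mc n) m ((ε/2) • z)) = (ε/2) • ρ (hMcle n) (j (Mc n) m z) := by
        simp only [map_smul]
      rw [h1] at hEq
      have h2 : (2/ε) • ((ε/2) • ρ (hMcle n) (j (Mc n) m z)) = ρ (hMcle n) (j (Mc n) m z) := by
        rw [smul_smul]
        have : (2/ε) * (ε/2) = 1 := by field_simp
        rw [this, one_smul]
      rw [← h2, ← hEq, smul_smul]
    have hnorm : ‖y (ρ (hMcle n) (j (Mc n) m z))‖ ≤
        ((2/ε) * ((q0.2:ℝ)+1)) * (S1.toReal + S2.toReal) := by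
      rw [hyz, map_smul]
      rw [norm_smul, Real.norm_eq_abs, abs_of_pos (by positivity : (0:ℝ) < (2/ε) * ((q0.2:ℝ)+1))]
      exact mul_le_mul_of_nonneg_left (hboundT a ha) (by positivity)
    calc ENNReal.ofReal ‖y (ρ (hMcle n) (j (Mc n) m z))‖ ≤
        ENNReal.ofReal (((2/ε) * ((q0.2:ℝ)+1)) * (S1.toReal + S2.toReal)) :=
          ENNReal.ofReal_le_ofReal hnorm
      _ = ENNReal.ofReal ((2/ε) * ((q0.2:ℝ)+1)) * ENNReal.ofReal (S1.toReal + S2.toReal) := by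
          rw [ENNReal.ofReal_mul (by positivity)]
      _ = ENNReal.ofReal ((2/ε) * ((q0.2:ℝ)+1)) * (ENNReal.ofReal S1.toReal +
          ENNReal.ofReal S2.toReal) := by rw [ENNReal.ofReal_add hs1 hs2]
      _ = ENNReal.ofReal ((2/ε) * ((q0.2:ℝ)+1)) * (S1 + S2) := by
          rw [ENNReal.ofReal_toReal hS1top, ENNReal.ofReal_toReal hS2top]
end
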